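/- arXiv:1301.0085 — 8 statements merged into one kernel-verified Lean document; each statement's English description precedes it below -/
import Mathlib

section
/- If R is a nilpotent ring of nilpotency degree n, then the adjoint group R^∘ is nilpotent of class at most n. -/
/-- `prodsOf R n` is the set of all products of `n + 1` elements of `R`. -/
def prodsOf (R : Type*) [NonUnitalRing R] : ℕ → Set R
  | 0 => Set.univ
  | n + 1 => {z | ∃ x ∈ prodsOf R n, ∃ y : R, z = x * y}

/-!
Let `Iₖ` be the additive span of the products of `k + 1` elements of `R`, a two-sided ideal, and
`Hₖ` its preimage in the adjoint group, a subgroup. For `g ∈ Hₖ` and any `h`, the identity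
`⁅g, h⁆ ∘ (h ∘ g) = g ∘ h` says that `c = ⁅g, h⁆` satisfies `c = (g h - h g) - c (h ∘ g)` with
`g h - h g ∈ Iₖ₊₁`; substituting `c ∈ Iⱼ` into the right-hand side gives `c ∈ Iⱼ₊₁`, so
`c ∈ Iₖ₊₁` after `k + 1` rounds. Hence `⁅Hₖ, G⁆ ≤ Hₖ₊₁`, the `k`-th term of the lower central
series lies in `Hₖ`, and `Hₙ` is trivial because `Iₙ = 0`.
-/

section Ring

variable {R : Type*} [NonUnitalRing R]

theorem mul_mem_prodsOf_succ : ∀ {k : ℕ} {p : R}, p ∈ prodsOf R k → ∀ r : R,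
    r * p ∈ prodsOf R (k + 1)
  | 0, p, _, r => ⟨r, trivial, p, rfl⟩
  | _ + 1, _, ⟨q, hq, z, rfl⟩, r =>
    ⟨r * q, mul_mem_prodsOf_succ hq r, z, (mul_assoc r q z).symm⟩

theorem prodsOf_succ_subset : ∀ k : ℕ, prodsOf R (k + 1) ⊆ prodsOf R k
  | 0 => fun _ _ => trivial
  | k + 1 => by
    rintro _ ⟨p, hp, y, rfl⟩
    exact ⟨p, prodsOf_succ_subset k hp, y, rfl⟩

variable (R) in
def prodsSpan (k : ℕ) : AddSubgroup R :=
  AddSubgroup.closure (prodsOf R k)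

theorem prodsSpan_antitone : Antitone (prodsSpan R) :=
  antitone_nat_of_succ_le fun k => AddSubgroup.closure_mono (prodsOf_succ_subset k)

theorem map_prodsSpan_le {f : R →+ R} {k l : ℕ} (hf : ∀ p ∈ prodsOf R k, f p ∈ prodsOf R l) :
    (prodsSpan R k).map f ≤ prodsSpan R l := by
  rw [prodsSpan, AddMonoidHom.map_closure, AddSubgroup.closure_le]
  rintro _ ⟨p, hp, rfl⟩
  exact AddSubgroup.subset_closure (hf p hp)

theorem mul_mem_prodsSpan_succ_of_mem_left {k : ℕ} {s : R} (hs : s ∈ prodsSpan R k) (y : R) :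
    s * y ∈ prodsSpan R (k + 1) :=
  map_prodsSpan_le (f := AddMonoidHom.mulRight y)
    (fun p hp => show p * y ∈ prodsOf R (k + 1) from ⟨p, hp, y, rfl⟩) ⟨s, hs, rfl⟩

theorem mul_mem_prodsSpan_succ_of_mem_right {k : ℕ} {s : R} (hs : s ∈ prodsSpan R k) (r : R) :
    r * s ∈ prodsSpan R (k + 1) :=
  map_prodsSpan_le (f := AddMonoidHom.mulLeft r) (fun _ hp => mul_mem_prodsOf_succ hp r)
    ⟨s, hs, rfl⟩

theorem prodsSpan_eq_bot {n : ℕ} (hnil : ∀ z ∈ prodsOf R n, z = 0) : prodsSpan R n = ⊥ :=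
  AddSubgroup.closure_eq_bot_iff.mpr hnil

theorem mem_prodsSpan_of_eq_add_mul {k : ℕ} {c d x : R} (hd : d ∈ prodsSpan R k)
    (hc : c = d + c * x) : c ∈ prodsSpan R k := by
  suffices ∀ j ≤ k, c ∈ prodsSpan R j from this k le_rfl
  intro j
  induction j with
  | zero => exact fun _ => AddSubgroup.subset_closure trivial
  | succ j ih =>
    intro hj
    rw [hc]
    exact add_mem (prodsSpan_antitone hj hd)
      (mul_mem_prodsSpan_succ_of_mem_left (ih (Nat.le_of_succ_le hj)) x)

end Ring

section AdjointGroup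

open scoped commutatorElement

variable {R : Type*} [NonUnitalRing R] {G : Type*} [Group G]

def IsAdjointEquiv (e : G ≃ R) : Prop :=
  ∀ g h : G, e (g * h) = e g + e h + e g * e h

namespace IsAdjointEquiv

variable {e : G ≃ R}

theorem map_one (he : IsAdjointEquiv e) : e 1 = 0 := by
  have := he (e.symm 0) 1
  rwa [mul_one, e.apply_symm_apply, zero_add, zero_mul, add_zero, eq_comm] at this

theorem map_inv (he : IsAdjointEquiv e) (g : G) : e g⁻¹ = -e g - e g * e g⁻¹ := by
  have := he g g⁻¹
  rw [mul_inv_cancel, he.map_one] at this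
  linear_combination (norm := noncomm_ring) -this

theorem map_commutatorElement (he : IsAdjointEquiv e) (g h : G) :
    e ⁅g, h⁆ = e g * e h - e h * e g - e ⁅g, h⁆ * e (h * g) := by
  have := he ⁅g, h⁆ (h * g)
  rw [show ⁅g, h⁆ * (h * g) = g * h by group, he g h] at this
  linear_combination (norm := noncomm_ring) -this - he h g

def comapSubgroup (he : IsAdjointEquiv e) (A : AddSubgroup R)
    (hA : ∀ a ∈ A, ∀ r : R, a * r ∈ A) : Subgroup G where
  carrier := e ⁻¹' A
  one_mem' := by
    rw [Set.mem_preimage, he.map_one]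
    exact A.zero_mem
  mul_mem' {g h} hg hh := by
    rw [Set.mem_preimage, he g h]
    exact add_mem (add_mem hg hh) (hA _ hg _)
  inv_mem' {g} hg := by
    rw [Set.mem_preimage, he.map_inv g]
    exact sub_mem (neg_mem hg) (hA _ hg _)

def prodsSpanSubgroup (he : IsAdjointEquiv e) (k : ℕ) : Subgroup G :=
  he.comapSubgroup (prodsSpan R k) fun _ ha r =>
    prodsSpan_antitone k.le_succ (mul_mem_prodsSpan_succ_of_mem_left ha r)

theorem map_commutatorElement_mem_prodsSpan_succ (he : IsAdjointEquiv e) {k : ℕ} {g : G}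
    (hg : e g ∈ prodsSpan R k) (h : G) : e ⁅g, h⁆ ∈ prodsSpan R (k + 1) := by
  have hd : e g * e h - e h * e g ∈ prodsSpan R (k + 1) :=
    sub_mem (mul_mem_prodsSpan_succ_of_mem_left hg _) (mul_mem_prodsSpan_succ_of_mem_right hg _)
  refine mem_prodsSpan_of_eq_add_mul hd (x := -e (h * g)) ?_
  rw [mul_neg, ← sub_eq_add_neg]
  exact he.map_commutatorElement g h

theorem lowerCentralSeries_le_prodsSpanSubgroup (he : IsAdjointEquiv e) (k : ℕ) :
    (⊤ : Subgroup G).lowerCentralSeries k ≤ he.prodsSpanSubgroup k := by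
  induction k with
  | zero => exact fun _ _ => AddSubgroup.subset_closure trivial
  | succ k ih =>
    rw [Subgroup.lowerCentralSeries_succ, Subgroup.commutator_le]
    exact fun g hg h _ => he.map_commutatorElement_mem_prodsSpan_succ (ih hg) h

end IsAdjointEquiv

end AdjointGroup

theorem adjoint_group_of_nilpotent_ring_is_nilpotent_general {R : Type*} [NonUnitalRing R]
    {G : Type*} [Group G] (n : ℕ)
    (hnil : ∀ z ∈ prodsOf R n, z = 0)
    (e : G ≃ R)
    (hemul : ∀ g h : G, e (g * h) = e g + e h + e g * e h) :
    (⊤ : Subgroup G).lowerCentralSeries n = ⊥ := by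
  have he : IsAdjointEquiv e := hemul
  refine (Subgroup.eq_bot_iff_forall _).mpr fun g hg => e.injective ?_
  have hg' : e g ∈ prodsSpan R n := he.lowerCentralSeries_le_prodsSpanSubgroup n hg
  rw [prodsSpan_eq_bot hnil, AddSubgroup.mem_bot] at hg'
  rw [hg', he.map_one]

/-- If `R` is a nilpotent ring of nilpotency degree (at most) `n`, then its adjoint
group `R^∘` (here: any group `G` isomorphic, via `e`, to `R` with the circle
operation `x ∘ y = x + y + x * y` and identity `0`) is nilpotent of class at most
`n`, i.e. `γ_{n+1} = lowerCentralSeries G n = ⊥`. -/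
theorem adjoint_group_of_nilpotent_ring_is_nilpotent {R : Type*} [NonUnitalRing R]
    {G : Type*} [Group G] (n : ℕ)
    (hnil : ∀ z ∈ prodsOf R n, z = 0)
    (e : G ≃ R) (he1 : e 1 = 0)
    (hemul : ∀ g h : G, e (g * h) = e g + e h + e g * e h) :
    (⊤ : Subgroup G).lowerCentralSeries n = ⊥ :=
  adjoint_group_of_nilpotent_ring_is_nilpotent_general n hnil e hemul
end

section
/- Let R be an associative ring whose additive group has finite exponent p^m. If R is left or right p-nil, then R is nilpotent of degree at most m, i.e., R^{m+1} = 0. -/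
lemma prodsOf_shift {R : Type*} [NonUnitalRing R] :
    ∀ n : ℕ, ∀ z ∈ prodsOf R (n + 1), ∃ y : R, ∃ x ∈ prodsOf R n, z = y * x := by
  intro n
  induction n with
  | zero =>
    rintro z ⟨x, -, y, rfl⟩
    exact ⟨x, y, trivial, rfl⟩
  | succ n ih =>
    rintro z ⟨w, hw, y, rfl⟩
    obtain ⟨u, v, hv, rfl⟩ := ih w hw
    exact ⟨u, v * y, ⟨v, hv, y, rfl⟩, mul_assoc u v y⟩

/-- If the additive group of `R` has finite exponent `p^m` and `R` is left or
right `p`-nil, then `R` is nilpotent of degree at most `m`, i.e. `R^{m+1} = 0`. -/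
theorem p_nil_ring_is_nilpotent {R : Type*} [NonUnitalRing R] (p m : ℕ) (hp : p.Prime)
    (hexp : AddMonoid.exponent R = p ^ m)
    (hpnil : (∀ x : R, p • x = 0 → ∀ y : R, x * y = 0) ∨
             (∀ x : R, p • x = 0 → ∀ y : R, y * x = 0)) :
    ∀ z ∈ prodsOf R m, z = 0 := by
  have key : ∀ n, n ≤ m → ∀ z ∈ prodsOf R n, p ^ (m - n) • z = 0 := by
    intro n
    induction n with
    | zero =>
      intro _ z _
      rw [Nat.sub_zero, ← hexp]
      exact AddMonoid.exponent_nsmul_eq_zero z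
    | succ n ih =>
      intro hn z hz
      have hnm : n ≤ m := Nat.le_of_succ_le hn
      have hsub : m - n = (m - (n + 1)) + 1 := by omega
      rcases hpnil with h | h
      · obtain ⟨x, hx, y, rfl⟩ := hz
        have hx0 : p ^ (m - n) • x = 0 := ih hnm x hx
        have hv : p • (p ^ (m - (n + 1)) • x) = 0 := by
          rw [smul_smul, ← pow_succ', ← hsub, hx0]
        have h0 := h _ hv y
        rw [← smul_mul_assoc, h0]
      · obtain ⟨y, x, hx, rfl⟩ := prodsOf_shift n z hz
        have hx0 : p ^ (m - n) • x = 0 := ih hnm x hx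
        have hv : p • (p ^ (m - (n + 1)) • x) = 0 := by
          rw [smul_smul, ← pow_succ', ← hsub, hx0]
        have h0 := h _ hv y
        rw [← mul_smul_comm, h0]
  intro z hz
  have := key m le_rfl z hz
  simpa using this
end

section
/- Let G be a group and A a normal abelian subgroup of G, viewed as a G-module via conjugation. The set Der(G,A) of derivations δ: G → A (maps satisfying δ(xy) = δ(x)^y · δ(y)) forms an associative ring under pointwise addition and the multiplication (δ₁δ₂)(x) = δ₂(δ₁(x)). -/
/-- A derivation from `G` into the normal abelian subgroup `A` (a `G`-module via
conjugation): a map `δ : G → G` with values in `A` such that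
`δ (x * y) = δ(x)^y * δ(y)`. -/
def IsDerivation {G : Type*} [Group G] (A : Subgroup G) (δ : G → G) : Prop :=
  (∀ x, δ x ∈ A) ∧ ∀ x y : G, δ (x * y) = y⁻¹ * δ x * y * δ y

section Aux
variable {G : Type*} [Group G] (A : Subgroup G)

theorem IsDerivation.d_one {δ : G → G} (h : IsDerivation A δ) : δ 1 = 1 := by
  have h1 := h.2 1 1
  rw [mul_one, inv_one, one_mul, mul_one] at h1
  exact mul_left_cancel (a := δ 1) (b := δ 1) (c := 1) (by rw [mul_one, ← h1])

theorem IsDerivation.d_inv {δ : G → G} (h : IsDerivation A δ) (y : G) :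
    δ y⁻¹ = y * ((δ y)⁻¹ * y⁻¹) := by
  have := h.2 y⁻¹ y
  rw [inv_mul_cancel, h.d_one A] at this
  -- 1 = y⁻¹ * δ y⁻¹ * y * δ y
  have : y⁻¹ * δ y⁻¹ * y = (δ y)⁻¹ := by
    rw [eq_inv_iff_mul_eq_one]; exact this.symm
  calc δ y⁻¹ = y * (y⁻¹ * δ y⁻¹ * y) * y⁻¹ := by group
    _ = y * ((δ y)⁻¹ * y⁻¹) := by rw [this]; group

-- swap lemma
theorem swap_aux (hA : ∀ a ∈ A, ∀ b ∈ A, a * b = b * a) {a b : G}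
    (ha : a ∈ A) (hb : b ∈ A) (c : G) : a * (b * c) = b * (a * c) := by
  rw [← mul_assoc, hA a ha b hb, mul_assoc]

theorem IsDerivation.d_conj [A.Normal] (hA : ∀ a ∈ A, ∀ b ∈ A, a * b = b * a)
    {δ : G → G} (h : IsDerivation A δ) {a : G} (ha : a ∈ A) (y : G) :
    δ (y⁻¹ * a * y) = y⁻¹ * δ a * y := by
  have h1 : δ (y⁻¹ * a) = a⁻¹ * δ y⁻¹ * a * δ a := h.2 y⁻¹ a
  have h2 : δ (y⁻¹ * a * y) = y⁻¹ * δ (y⁻¹ * a) * y * δ y := h.2 (y⁻¹ * a) y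
  rw [h1, h.d_inv A] at h2
  rw [h2]
  -- now pure identity with commutation
  have hu : y⁻¹ * a * y ∈ A := Subgroup.Normal.conj_mem' ‹A.Normal› a ha y
  have hv : y⁻¹ * δ a * y ∈ A := Subgroup.Normal.conj_mem' ‹A.Normal› (δ a) (h.1 a) y
  have hw : δ y ∈ A := h.1 y
  -- LHS = u⁻¹ * w⁻¹ * u * v * w where u = y⁻¹ a y, v = y⁻¹ δa y, w = δ y
  have key : ∀ u v w : G, u ∈ A → v ∈ A → w ∈ A →
      u⁻¹ * (w⁻¹ * (u * (v * w))) = v := by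
    intro u v w hu hv hw
    rw [swap_aux A hA (A.inv_mem hw) hu, ← mul_assoc, inv_mul_cancel, one_mul,
      swap_aux A hA (A.inv_mem hw) hv, inv_mul_cancel, mul_one]
  have := key _ _ _ hu hv hw
  calc y⁻¹ * (a⁻¹ * (y * ((δ y)⁻¹ * y⁻¹)) * a * δ a) * y * δ y
      = (y⁻¹ * a * y)⁻¹ * ((δ y)⁻¹ * ((y⁻¹ * a * y) * ((y⁻¹ * δ a * y) * δ y))) := by group
    _ = y⁻¹ * δ a * y := this

theorem IsDerivation.d_mul_mem (hA : ∀ a ∈ A, ∀ b ∈ A, a * b = b * a)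
    {δ : G → G} (h : IsDerivation A δ) {a b : G} (ha : a ∈ A) (hb : b ∈ A) :
    δ (a * b) = δ a * δ b := by
  rw [h.2 a b]
  rw [hA b⁻¹ (A.inv_mem hb) (δ a) (h.1 a)]
  rw [mul_assoc (δ a), inv_mul_cancel, mul_one]

end Aux

/-- The derivations from `G` into a normal abelian subgroup `A` form an associative
ring under pointwise addition `(δ₁ + δ₂)(x) = δ₁(x) · δ₂(x)` (written multiplicatively
in `A`) and the multiplication `(δ₁ δ₂)(x) = δ₂(δ₁(x))`: the set of derivations is
closed under these operations, contains zero and negatives, and the ring axioms hold. -/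
theorem derivations_form_a_ring {G : Type*} [Group G] (A : Subgroup G) [A.Normal]
    (hA : ∀ a ∈ A, ∀ b ∈ A, a * b = b * a) :
    -- closure under addition
    (∀ δ₁ δ₂ : G → G, IsDerivation A δ₁ → IsDerivation A δ₂ →
      IsDerivation A fun x => δ₁ x * δ₂ x) ∧
    -- closure under multiplication `(δ₁ δ₂)(x) = δ₂ (δ₁ x)`
    (∀ δ₁ δ₂ : G → G, IsDerivation A δ₁ → IsDerivation A δ₂ →
      IsDerivation A fun x => δ₂ (δ₁ x)) ∧
    -- additive identity and inverses
    IsDerivation A (fun _ => (1 : G)) ∧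
    (∀ δ : G → G, IsDerivation A δ → IsDerivation A fun x => (δ x)⁻¹) ∧
    -- the additive group axioms (commutativity; associativity, identity and
    -- inverses hold pointwise)
    (∀ δ₁ δ₂ : G → G, IsDerivation A δ₁ → IsDerivation A δ₂ →
      (fun x => δ₁ x * δ₂ x) = fun x => δ₂ x * δ₁ x) ∧
    (∀ δ₁ δ₂ δ₃ : G → G, IsDerivation A δ₁ → IsDerivation A δ₂ → IsDerivation A δ₃ →
      (fun x => (δ₁ x * δ₂ x) * δ₃ x) = fun x => δ₁ x * (δ₂ x * δ₃ x)) ∧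
    (∀ δ : G → G, IsDerivation A δ → ((fun x => δ x * (δ x)⁻¹) = fun _ => (1 : G))) ∧
    -- associativity of multiplication
    (∀ δ₁ δ₂ δ₃ : G → G, IsDerivation A δ₁ → IsDerivation A δ₂ → IsDerivation A δ₃ →
      (fun x => δ₃ (δ₂ (δ₁ x))) = fun x => δ₃ (δ₂ (δ₁ x))) ∧
    -- distributivity
    (∀ δ δ₁ δ₂ : G → G, IsDerivation A δ → IsDerivation A δ₁ → IsDerivation A δ₂ →
      (fun x => δ₁ (δ x) * δ₂ (δ x)) = fun x => δ₁ (δ x) * δ₂ (δ x)) ∧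
    (∀ δ δ₁ δ₂ : G → G, IsDerivation A δ → IsDerivation A δ₁ → IsDerivation A δ₂ →
      (fun x => δ (δ₁ x * δ₂ x)) = fun x => δ (δ₁ x) * δ (δ₂ x)) := by
  have hN : A.Normal := ‹A.Normal›
  refine ⟨?_, ?_, ?_, ?_, ?_, ?_, ?_, ?_, ?_, ?_⟩
  · -- closure under addition
    intro δ₁ δ₂ h₁ h₂
    refine ⟨fun x => A.mul_mem (h₁.1 x) (h₂.1 x), fun x y => ?_⟩
    simp only
    rw [h₁.2, h₂.2]
    have c : δ₁ y * (y⁻¹ * δ₂ x * y) = (y⁻¹ * δ₂ x * y) * δ₁ y :=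
      hA _ (h₁.1 y) _ (hN.conj_mem' (δ₂ x) (h₂.1 x) y)
    calc (y⁻¹ * δ₁ x * y * δ₁ y) * (y⁻¹ * δ₂ x * y * δ₂ y)
        = y⁻¹ * δ₁ x * y * (δ₁ y * (y⁻¹ * δ₂ x * y)) * δ₂ y := by group
      _ = y⁻¹ * δ₁ x * y * ((y⁻¹ * δ₂ x * y) * δ₁ y) * δ₂ y := by rw [c]
      _ = y⁻¹ * (δ₁ x * δ₂ x) * y * (δ₁ y * δ₂ y) := by group
  · -- closure under multiplication
    intro δ₁ δ₂ h₁ h₂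
    refine ⟨fun x => h₂.1 _, fun x y => ?_⟩
    simp only
    rw [h₁.2, h₂.d_mul_mem A hA (hN.conj_mem' (δ₁ x) (h₁.1 x) y) (h₁.1 y),
      h₂.d_conj A hA (h₁.1 x) y]
  · exact ⟨fun _ => A.one_mem, fun x y => by group⟩
  · intro δ h
    refine ⟨fun x => A.inv_mem (h.1 x), fun x y => ?_⟩
    simp only
    rw [h.2]
    have c : (δ y)⁻¹ * (y⁻¹ * (δ x)⁻¹ * y) = (y⁻¹ * (δ x)⁻¹ * y) * (δ y)⁻¹ :=
      hA _ (A.inv_mem (h.1 y)) _ (hN.conj_mem' (δ x)⁻¹ (A.inv_mem (h.1 x)) y)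
    calc (y⁻¹ * δ x * y * δ y)⁻¹
        = (δ y)⁻¹ * (y⁻¹ * (δ x)⁻¹ * y) := by group
      _ = (y⁻¹ * (δ x)⁻¹ * y) * (δ y)⁻¹ := c
      _ = y⁻¹ * (δ x)⁻¹ * y * (δ y)⁻¹ := rfl
  · intro δ₁ δ₂ h₁ h₂; funext x; exact hA _ (h₁.1 x) _ (h₂.1 x)
  · intro δ₁ δ₂ δ₃ _ _ _; funext x; exact mul_assoc _ _ _
  · intro δ _; funext x; exact mul_inv_cancel _
  · intro δ₁ δ₂ δ₃ _ _ _; rfl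
  · intro δ δ₁ δ₂ _ _ _; rfl
  · intro δ δ₁ δ₂ h h₁ h₂; funext x; exact h.d_mul_mem A hA (h₁.1 x) (h₂.1 x)
end

section
/- If G is a purely non-abelian finite p-group (G has no nontrivial abelian direct factor), then Ω₁(Z(G)) ≤ Φ(G), i.e., every central element of order dividing p lies in the Frattini subgroup. -/
/-!
A central element `z` of order `p` outside some maximal subgroup `M` splits off `G`:
`⟨z⟩ ⊔ M = G` by maximality, `⟨z⟩ ⊓ M = 1` because `⟨z⟩` has prime order, and `M` is normal
because it is normalized by itself and by the central `⟨z⟩`. So `G = ⟨z⟩ × M` with `⟨z⟩`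
a nontrivial abelian factor.
-/

open Subgroup

namespace Subgroup

variable {G : Type*} [Group G]

lemma normal_of_sup_eq_top_of_le_center {K H : Subgroup G} (hK : K ≤ center G)
    (hKH : K ⊔ H = ⊤) : H.Normal :=
  normalizer_eq_top_iff.mp <| top_le_iff.mp <|
    hKH ▸ sup_le (hK.trans (center_le_normalizer _)) le_normalizer

lemma mem_zpowers_of_mem_zpowers_of_orderOf_prime {g x : G} (hg : (orderOf g).Prime)
    (hx : x ∈ zpowers g) (hx1 : x ≠ 1) : g ∈ zpowers x := by
  have : Fact (orderOf g).Prime := ⟨hg⟩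
  obtain ⟨k, hk⟩ := mem_zpowers_of_prime_card (Nat.card_zpowers g)
    (g := (⟨x, hx⟩ : zpowers g)) (g' := ⟨g, mem_zpowers g⟩) (by simpa using hx1)
  exact ⟨k, by simpa using congrArg Subtype.val hk⟩

lemma disjoint_zpowers_of_orderOf_prime {g : G} {H : Subgroup G} (hg : (orderOf g).Prime)
    (hgH : g ∉ H) : Disjoint (zpowers g) H :=
  disjoint_def.mpr fun hx hxH ↦ by_contra fun hx1 ↦
    hgH (zpowers_le.mpr hxH (mem_zpowers_of_mem_zpowers_of_orderOf_prime hg hx hx1))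

lemma zpowers_sup_eq_top_of_notMem_coatom {g : G} {M : Subgroup G} (hM : IsCoatom M)
    (hgM : g ∉ M) : zpowers g ⊔ M = ⊤ := by
  rw [sup_comm, ← codisjoint_iff]
  exact hM.not_le_iff_codisjoint.mp (by rwa [zpowers_le])

end Subgroup

lemma mem_frattini_iff {G : Type*} [Group G] {g : G} :
    g ∈ frattini G ↔ ∀ M : Subgroup G, IsCoatom M → g ∈ M := by
  simp only [frattini, Order.radical, mem_iInf, Set.mem_ofPred_eq]

theorem omega1_center_le_frattini_general {G : Type*} [Group G]
    (p : ℕ) (hp : p.Prime)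
    (hpna : ¬ ∃ A N : Subgroup G, A ≠ ⊥ ∧ (∀ a ∈ A, ∀ b ∈ A, a * b = b * a) ∧
      N.Normal ∧ Disjoint A N ∧ A ⊔ N = ⊤ ∧ ∀ a ∈ A, ∀ n ∈ N, a * n = n * a) :
    ∀ z ∈ Subgroup.center G, z ^ p = 1 → z ∈ frattini G := by
  intro z hz hzp
  by_contra hzΦ
  obtain ⟨M, hM, hzM⟩ : ∃ M : Subgroup G, IsCoatom M ∧ z ∉ M := by
    simpa [mem_frattini_iff] using hzΦ
  have hz1 : z ≠ 1 := fun h ↦ hzΦ (h ▸ (frattini G).one_mem)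
  have : Fact p.Prime := ⟨hp⟩
  have hprime : (orderOf z).Prime := orderOf_eq_prime hzp hz1 ▸ hp
  have hcen : zpowers z ≤ center G := zpowers_le.mpr hz
  have hsup : zpowers z ⊔ M = ⊤ := zpowers_sup_eq_top_of_notMem_coatom hM hzM
  exact hpna ⟨zpowers z, M, zpowers_ne_bot.mpr hz1,
    fun a _ b hb ↦ mem_center_iff.mp (hcen hb) a,
    normal_of_sup_eq_top_of_le_center hcen hsup, disjoint_zpowers_of_orderOf_prime hprime hzM,
    hsup, fun a ha n _ ↦ (mem_center_iff.mp (hcen ha) n).symm⟩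

/-- If `G` is a purely non-abelian finite `p`-group (no nontrivial abelian direct
factor), then `Ω₁(Z(G)) ≤ Φ(G)`: every central element of order dividing `p` lies
in the Frattini subgroup. -/
theorem omega1_center_le_frattini {G : Type*} [Group G] [Finite G]
    (p : ℕ) (hp : p.Prime) (hG : IsPGroup p G)
    (hpna : ¬ ∃ A N : Subgroup G, A ≠ ⊥ ∧ (∀ a ∈ A, ∀ b ∈ A, a * b = b * a) ∧
      N.Normal ∧ Disjoint A N ∧ A ⊔ N = ⊤ ∧ ∀ a ∈ A, ∀ n ∈ N, a * n = n * a) :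
    ∀ z ∈ Subgroup.center G, z ^ p = 1 → z ∈ frattini G :=
  omega1_center_le_frattini_general p hp hpna
end

section
/- Let G be a finite p-group and H the full inverse image in G of Ω₁(ζ₂(G)/ζ₁(G)). Then H centralizes the Frattini subgroup: H ≤ C_G(Φ(G)). Moreover, if C_G(Φ(G)) ≤ Φ(G), then H is abelian. -/
/-!
For `h` in the second center, `g ↦ ⁅h, g⁆` is a homomorphism from `G` into the abelian group
`Z(G)`, whose kernel is the centralizer of `h`. It kills the commutator subgroup, and when
`h ^ p` is central it also kills every `g ^ p`, because `⁅h, g⁆ ^ p = ⁅h ^ p, g⁆ = 1`. So its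
kernel contains `G' G^p`, and hence `Φ(G)`: the quotient by a subgroup containing `G' G^p` is an
elementary abelian `p`-group, i.e. an `𝔽_p`-vector space, in which the maximal subgroups
(hyperplanes) intersect trivially. If moreover `C_G(Φ(G)) ≤ Φ(G)`, then `H ≤ Φ(G)` and `H`
centralizes `Φ(G)`, so `H` is abelian.
-/

open scoped commutatorElement

theorem Order.radical_eq_bot {α : Type*} [CompleteLattice α] [IsModularLattice α]
    [ComplementedLattice α] [IsAtomic α] : Order.radical α = ⊥ := by
  refine (eq_bot_or_exists_atom_le _).resolve_right ?_
  rintro ⟨a, ha, ha_le⟩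
  obtain ⟨b, hab⟩ := exists_isCompl a
  have hab_le : a ≤ b := ha_le.trans (Order.radical_le_coatom (hab.isAtom_iff_isCoatom.mp ha))
  exact ha.ne_bot (hab.inf_eq_bot ▸ (inf_eq_left.mpr hab_le).symm)

open scoped IsMulCommutative in
theorem frattini_eq_bot_of_pow_eq_one {Q : Type*} [Group Q] [IsMulCommutative Q] (p : ℕ)
    [Fact p.Prime] (hQ : ∀ q : Q, q ^ p = 1) : frattini Q = ⊥ := by
  -- kept opaque: only the lattice of submodules matters, not the definition of the scalar action
  have : Module (ZMod p) (Additive Q) := AddCommGroup.zmodModule fun q ↦ hQ q.toMul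
  let e := (Subgroup.toAddSubgroup (G := Q)).trans (AddSubgroup.toZModSubmodule p)
  apply e.injective
  rw [map_bot]
  exact (e.map_radical).trans Order.radical_eq_bot

theorem frattini_le_of_commutator_le_of_pow_mem {G : Type*} [Group G] (p : ℕ) [Fact p.Prime]
    {K : Subgroup G} (hcomm : commutator G ≤ K) (hpow : ∀ g : G, g ^ p ∈ K) :
    frattini G ≤ K := by
  have := Subgroup.Normal.of_commutator_le G hcomm
  have := Subgroup.Normal.quotient_commutative_iff_commutator_le.mpr hcomm
  have hQ : ∀ q : G ⧸ K, q ^ p = 1 := by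
    intro q
    induction q using QuotientGroup.induction_on with
    | H g => exact (QuotientGroup.eq_one_iff _).mpr (hpow g)
  have := frattini_le_comap_frattini_of_surjective (QuotientGroup.mk'_surjective K)
  rwa [frattini_eq_bot_of_pow_eq_one p hQ, MonoidHom.comap_bot, QuotientGroup.ker_mk'] at this

section SecondCenter

variable {G : Type*} [Group G]

theorem commutatorElement_mem_center_of_mem_upperCentralSeries_two {h : G}
    (hh : h ∈ Subgroup.upperCentralSeries G 2) (g : G) : ⁅h, g⁆ ∈ Subgroup.center G :=
  Subgroup.upperCentralSeries_one G ▸ Subgroup.mem_upperCentralSeries_succ_iff.mp hh g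

theorem commutatorElement_pow_left_of_mem_center {a b : G} (hab : ⁅a, b⁆ ∈ Subgroup.center G)
    (n : ℕ) : ⁅a ^ n, b⁆ = ⁅a, b⁆ ^ n := by
  induction n with
  | zero => simp
  | succ n ih =>
    rw [pow_succ', commutatorElement_mul_left_eq_conj_mul, ih,
      Subgroup.mem_center_iff.mp (pow_mem hab n) a, mul_inv_cancel_right, pow_succ]

theorem commutatorElement_eq_one_of_mem_center {z : G} (hz : z ∈ Subgroup.center G) (g : G) :
    ⁅z, g⁆ = 1 :=
  commutatorElement_eq_one_iff_mul_comm.mpr (Subgroup.mem_center_iff.mp hz g).symm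

def secondCenterCommutatorHom (h : G) (hh : h ∈ Subgroup.upperCentralSeries G 2) :
    G →* Subgroup.center G where
  toFun g := ⟨⁅h, g⁆, commutatorElement_mem_center_of_mem_upperCentralSeries_two hh g⟩
  map_one' := Subtype.ext (commutatorElement_one_right h)
  map_mul' a b := Subtype.ext <| show ⁅h, a * b⁆ = ⁅h, a⁆ * ⁅h, b⁆ by
    have hb := commutatorElement_mem_center_of_mem_upperCentralSeries_two hh b
    rw [commutatorElement_mul_right_eq_mul_conj, mul_assoc _ a,
      Subgroup.mem_center_iff.mp hb a, ← mul_assoc, mul_inv_cancel_right]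

theorem mem_ker_secondCenterCommutatorHom {h g : G}
    (hh : h ∈ Subgroup.upperCentralSeries G 2) :
    g ∈ (secondCenterCommutatorHom h hh).ker ↔ h * g = g * h := by
  rw [MonoidHom.mem_ker, ← Subtype.coe_inj]
  exact commutatorElement_eq_one_iff_mul_comm

theorem pow_mem_ker_secondCenterCommutatorHom {h : G}
    (hh : h ∈ Subgroup.upperCentralSeries G 2) {p : ℕ} (hhp : h ^ p ∈ Subgroup.center G)
    (g : G) : g ^ p ∈ (secondCenterCommutatorHom h hh).ker := by
  rw [MonoidHom.mem_ker, map_pow]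
  exact Subtype.ext <| (commutatorElement_pow_left_of_mem_center
    (commutatorElement_mem_center_of_mem_upperCentralSeries_two hh g) p).symm.trans
    (commutatorElement_eq_one_of_mem_center hhp g)

open scoped IsMulCommutative in
theorem frattini_le_ker_secondCenterCommutatorHom {h : G}
    (hh : h ∈ Subgroup.upperCentralSeries G 2) (p : ℕ) [Fact p.Prime]
    (hhp : h ^ p ∈ Subgroup.center G) :
    frattini G ≤ (secondCenterCommutatorHom h hh).ker :=
  frattini_le_of_commutator_le_of_pow_mem p (Abelianization.commutator_subset_ker _)
    (pow_mem_ker_secondCenterCommutatorHom hh hhp)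

end SecondCenter

theorem preimage_omega1_centralizes_frattini_general {G : Type*} [Group G]
    (p : ℕ) (hp : p.Prime) :
    (∀ h : G, h ∈ upperCentralSeries G 2 → h ^ p ∈ Subgroup.center G →
      h ∈ Subgroup.centralizer (frattini G : Set G)) ∧
    (Subgroup.centralizer (frattini G : Set G) ≤ frattini G →
      ∀ h₁ h₂ : G,
        h₁ ∈ upperCentralSeries G 2 → h₁ ^ p ∈ Subgroup.center G →
        h₂ ∈ upperCentralSeries G 2 → h₂ ^ p ∈ Subgroup.center G →
        h₁ * h₂ = h₂ * h₁) := by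
  have : Fact p.Prime := ⟨hp⟩
  have centralizes : ∀ h : G, h ∈ upperCentralSeries G 2 → h ^ p ∈ Subgroup.center G →
      h ∈ Subgroup.centralizer (frattini G : Set G) := fun h hh hhp ↦
    Subgroup.mem_centralizer_iff.mpr fun _ hy ↦
      ((mem_ker_secondCenterCommutatorHom hh).mp
        (frattini_le_ker_secondCenterCommutatorHom hh p hhp hy)).symm
  refine ⟨centralizes, fun hle h₁ h₂ hh₁ hp₁ hh₂ hp₂ ↦ ?_⟩
  exact Subgroup.mem_centralizer_iff.mp (centralizes h₂ hh₂ hp₂) h₁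
    (hle (centralizes h₁ hh₁ hp₁))

/-- Let `G` be a finite `p`-group and `H` the full inverse image in `G` of
`Ω₁(ζ₂(G)/ζ₁(G))`, i.e. `H = {h ∈ ζ₂(G) : h^p ∈ ζ₁(G)}`. Then `H ≤ C_G(Φ(G))`;
moreover, if `C_G(Φ(G)) ≤ Φ(G)`, then `H` is abelian. -/
theorem preimage_omega1_centralizes_frattini {G : Type*} [Group G] [Finite G]
    (p : ℕ) (hp : p.Prime) (hG : IsPGroup p G) :
    (∀ h : G, h ∈ upperCentralSeries G 2 → h ^ p ∈ Subgroup.center G →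
      h ∈ Subgroup.centralizer (frattini G : Set G)) ∧
    (Subgroup.centralizer (frattini G : Set G) ≤ frattini G →
      ∀ h₁ h₂ : G,
        h₁ ∈ upperCentralSeries G 2 → h₁ ^ p ∈ Subgroup.center G →
        h₂ ∈ upperCentralSeries G 2 → h₂ ^ p ∈ Subgroup.center G →
        h₁ * h₂ = h₂ * h₁) :=
  preimage_omega1_centralizes_frattini_general p hp
end

section
/- Let G be a finite p-group with C_G(Φ(G)) ≤ Φ(G), and let H be the preimage in G of Ω₁(ζ₂(G)/ζ₁(G)). Then the square of the ring D = Der(G,H) is contained in Hom(G, Z(G)): for all δ₁, δ₂ ∈ D and x ∈ G, δ₂(δ₁(x)) defines a homomorphism into the center, i.e., every product of two derivations in D is a homomorphism from G to ζ(G). -/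
/-- A derivation from `G` into a set `S ⊆ G` (for the conjugation action). -/
def IsDerivationInto {G : Type*} [Group G] (S : Set G) (δ : G → G) : Prop :=
  (∀ x, δ x ∈ S) ∧ ∀ x y : G, δ (x * y) = y⁻¹ * δ x * y * δ y

/-!
For `h ∈ ζ₂(G)` the map `g ↦ ⁅h, g⁆` is a homomorphism into `ζ(G)`, of exponent `p` when
`h ^ p` is central. A homomorphism to a group whose image is abelian of exponent `p` kills
`Φ(G)`, since an elementary abelian `p`-group is an `𝔽_p`-vector space and its maximal subspaces
meet in `0`. Hence `H` centralizes `Φ(G)`, so `H ≤ C_G(Φ(G)) ≤ Φ(G)` and `H` is abelian.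
A derivation `δ` into `H` is a homomorphism modulo `ζ(G)` with abelian image of exponent `p`,
so `δ(Φ(G)) ≤ ζ(G)`; in particular `δ₂ ∘ δ₁` is central-valued. Since `δ₂` is central on `H` and
`H` is abelian, `δ₂` is invariant under conjugation of its argument in `H`, which turns the
derivation rule for `δ₂ ∘ δ₁` into multiplicativity.
-/

open scoped commutatorElement
open Subgroup (center mem_center_iff)

theorem Submodule.radical_eq_bot {K V : Type*} [Field K] [AddCommGroup V] [Module K V] :
    Order.radical (Submodule K V) = ⊥ := by
  refine eq_bot_iff.mpr fun v hv => (Submodule.mem_bot K).mpr ?_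
  refine (Module.forall_dual_apply_eq_zero_iff K v).mp fun f => ?_
  rcases eq_or_ne f 0 with rfl | hf
  · rfl
  · exact Order.radical_le_coatom (LinearMap.isCoatom_ker_of_surjective
      (LinearMap.surjective_of_ne_zero hf)) hv

theorem frattini_eq_bot_of_pow_eq_one_s11 {A : Type*} [CommGroup A] {p : ℕ} (hp : p.Prime)
    (hA : ∀ a : A, a ^ p = 1) : frattini A = ⊥ := by
  have := Fact.mk hp
  let _ : Module (ZMod p) (Additive A) :=
    AddCommGroup.zmodModule (n := p) fun a : Additive A => hA a.toMul
  let e : Subgroup A ≃o Submodule (ZMod p) (Additive A) :=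
    Subgroup.toAddSubgroup.trans (AddSubgroup.toZModSubmodule p)
  apply e.injective
  rw [frattini, e.map_radical, Submodule.radical_eq_bot, map_bot]

open scoped IsMulCommutative in
theorem frattini_le_ker_of_commute_of_pow_eq_one {G Q : Type*} [Group G] [Group Q] {p : ℕ}
    (hp : p.Prime) (φ : G →* Q) (hcomm : ∀ a b, Commute (φ a) (φ b))
    (hpow : ∀ a, φ a ^ p = 1) : frattini G ≤ φ.ker := by
  have : IsMulCommutative φ.range := .of_comm <| by
    rintro ⟨_, a, rfl⟩ ⟨_, b, rfl⟩
    exact Subtype.ext (hcomm a b)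
  have hrange : frattini φ.range = ⊥ := frattini_eq_bot_of_pow_eq_one_s11 hp <| by
    rintro ⟨_, a, rfl⟩
    exact Subtype.ext (hpow a)
  simpa [hrange] using frattini_le_comap_frattini_of_surjective φ.rangeRestrict_surjective

section

variable {G : Type*} [Group G]

theorem commute_of_mem_center {z : G} (hz : z ∈ center G) (g : G) : Commute g z :=
  mem_center_iff.mp hz g

theorem commutatorElement_mem_center {h : G} (hh : h ∈ Subgroup.upperCentralSeries G 2) (g : G) :
    ⁅h, g⁆ ∈ center G :=
  Subgroup.upperCentralSeries_one G ▸ Subgroup.mem_upperCentralSeries_succ_iff.mp hh g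

theorem commutatorElement_pow_left {h : G} (hh : h ∈ Subgroup.upperCentralSeries G 2) (g : G)
    (n : ℕ) : ⁅h ^ n, g⁆ = ⁅h, g⁆ ^ n := by
  have hconj : g * h⁻¹ * g⁻¹ = h⁻¹ * ⁅h, g⁆ := by group
  calc ⁅h ^ n, g⁆ = h ^ n * (g * h⁻¹ * g⁻¹) ^ n := by rw [conj_pow, inv_pow]; group
    _ = ⁅h, g⁆ ^ n := by
      rw [hconj, (commute_of_mem_center (commutatorElement_mem_center hh g) h⁻¹).mul_pow,
        inv_pow, mul_inv_cancel_left]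

def commutatorElementHom {h : G} (hh : h ∈ Subgroup.upperCentralSeries G 2) : G →* G :=
  MonoidHom.mk' (fun g => ⁅h, g⁆) fun a b => by
    rw [commutatorElement_mul_right_eq_mul_conj, mul_assoc _ a,
      (commute_of_mem_center (commutatorElement_mem_center hh b) a).eq, mul_assoc,
      mul_inv_cancel_right]

theorem commute_of_mem_frattini_of_pow_mem_center {p : ℕ} (hp : p.Prime) {h : G}
    (hh : h ∈ Subgroup.upperCentralSeries G 2) (hhp : h ^ p ∈ center G) {f : G}
    (hf : f ∈ frattini G) : Commute h f := by
  refine commutatorElement_eq_one_iff_commute.mp <| MonoidHom.mem_ker.mp <|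
    frattini_le_ker_of_commute_of_pow_eq_one hp (commutatorElementHom hh) (fun a b => ?_)
      (fun a => ?_) hf
  · exact commute_of_mem_center (commutatorElement_mem_center hh b) _
  · show ⁅h, a⁆ ^ p = 1
    rw [← commutatorElement_pow_left hh, commutatorElement_eq_one_iff_commute]
    exact (commute_of_mem_center hhp a).symm

/-- The preimage `H` of `Ω₁(ζ₂(G)/ζ₁(G))`. -/
def omegaOneUpperCentral (G : Type*) [Group G] (p : ℕ) : Set G :=
  {h | h ∈ Subgroup.upperCentralSeries G 2 ∧ h ^ p ∈ center G}

theorem conj_mem_omegaOneUpperCentral {p : ℕ} {a : G} (ha : a ∈ omegaOneUpperCentral G p)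
    (y : G) : y⁻¹ * a * y ∈ omegaOneUpperCentral G p := by
  refine ⟨(inferInstance : (Subgroup.upperCentralSeries G 2).Normal).conj_mem' a ha.1 y, ?_⟩
  have hpow : (y⁻¹ * a * y) ^ p = y⁻¹ * a ^ p * y := by
    simpa using conj_pow (a := y⁻¹) (b := a)
  rw [hpow, (commute_of_mem_center ha.2 y).inv_mul_cancel]
  exact ha.2

theorem mem_frattini_of_mem_omegaOneUpperCentral {p : ℕ} (hp : p.Prime)
    (hc : Subgroup.centralizer (frattini G : Set G) ≤ frattini G) {h : G}
    (hh : h ∈ omegaOneUpperCentral G p) : h ∈ frattini G :=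
  hc <| Subgroup.mem_centralizer_iff.mpr fun _ hf =>
    (commute_of_mem_frattini_of_pow_mem_center hp hh.1 hh.2 hf).eq.symm

theorem commute_of_mem_omegaOneUpperCentral {p : ℕ} (hp : p.Prime)
    (hc : Subgroup.centralizer (frattini G : Set G) ≤ frattini G) {a b : G}
    (ha : a ∈ omegaOneUpperCentral G p) (hb : b ∈ omegaOneUpperCentral G p) : Commute a b :=
  commute_of_mem_frattini_of_pow_mem_center hp ha.1 ha.2
    (mem_frattini_of_mem_omegaOneUpperCentral hp hc hb)

theorem QuotientGroup.mk_conj_eq_of_mem_upperCentralSeries_two {a : G}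
    (ha : a ∈ Subgroup.upperCentralSeries G 2) (y : G) :
    ((y⁻¹ * a * y : G) : G ⧸ center G) = a := by
  refine (QuotientGroup.eq.mpr ?_).symm
  have h : a⁻¹ * (y⁻¹ * a * y) = ⁅a⁻¹, y⁻¹⁆ := by simp [commutatorElement_def, mul_assoc]
  exact h ▸ commutatorElement_mem_center (inv_mem ha) y⁻¹

namespace IsDerivationInto

variable {S : Set G} {δ : G → G}

def toQuotientCenter (hδ : IsDerivationInto S δ) (hS : S ⊆ Subgroup.upperCentralSeries G 2) :
    G →* G ⧸ center G :=
  MonoidHom.mk' (fun x => (δ x : G ⧸ center G)) fun x y => by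
    rw [hδ.2, QuotientGroup.mk_mul,
      QuotientGroup.mk_conj_eq_of_mem_upperCentralSeries_two (hS (hδ.1 x))]

theorem apply_mem_center_of_mem_frattini {p : ℕ} (hp : p.Prime)
    (hc : Subgroup.centralizer (frattini G : Set G) ≤ frattini G)
    (hδ : IsDerivationInto (omegaOneUpperCentral G p) δ) {f : G} (hf : f ∈ frattini G) :
    δ f ∈ center G := by
  have hker := frattini_le_ker_of_commute_of_pow_eq_one hp (hδ.toQuotientCenter fun _ h => h.1)
    (fun a b => ?_) (fun a => ?_) hf
  · exact (QuotientGroup.eq_one_iff _).mp hker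
  · show Commute (δ a : G ⧸ center G) (δ b)
    exact (commute_of_mem_omegaOneUpperCentral hp hc (hδ.1 a) (hδ.1 b)).map (QuotientGroup.mk' _)
  · show (δ a : G ⧸ center G) ^ p = 1
    rw [← QuotientGroup.mk_pow, QuotientGroup.eq_one_iff]
    exact (hδ.1 a).2

theorem apply_conj_eq (hδ : IsDerivationInto S δ) {a y : G} (ha : δ a ∈ center G)
    (hcomm : Commute (y⁻¹ * a * y) (δ y)) : δ (y⁻¹ * a * y) = δ a := by
  have hleft : δ (a * y) = δ a * δ y := by
    rw [hδ.2, (commute_of_mem_center ha y).inv_mul_cancel]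
  have hright : δ (a * y) = δ y * δ (y⁻¹ * a * y) := by
    rw [show a * y = y * (y⁻¹ * a * y) by group, hδ.2, hcomm.inv_mul_cancel]
  refine mul_left_cancel (a := δ y) ?_
  rw [← hright, hleft]
  exact (commute_of_mem_center ha (δ y)).eq.symm

end IsDerivationInto

end

theorem der_square_subset_hom_center_general {G : Type*} [Group G]
    (p : ℕ) (hp : p.Prime)
    (hc : Subgroup.centralizer (frattini G : Set G) ≤ frattini G) :
    ∀ δ₁ δ₂ : G → G,
      IsDerivationInto {h : G | h ∈ upperCentralSeries G 2 ∧ h ^ p ∈ Subgroup.center G} δ₁ →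
      IsDerivationInto {h : G | h ∈ upperCentralSeries G 2 ∧ h ^ p ∈ Subgroup.center G} δ₂ →
      (∀ x : G, δ₂ (δ₁ x) ∈ Subgroup.center G) ∧
      (∀ x y : G, δ₂ (δ₁ (x * y)) = δ₂ (δ₁ x) * δ₂ (δ₁ y)) := by
  intro δ₁ δ₂ hδ₁ hδ₂
  have hcenter (x : G) : δ₂ (δ₁ x) ∈ Subgroup.center G :=
    hδ₂.apply_mem_center_of_mem_frattini hp hc
      (mem_frattini_of_mem_omegaOneUpperCentral hp hc (hδ₁.1 x))
  refine ⟨hcenter, fun x y => ?_⟩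
  have hconj := conj_mem_omegaOneUpperCentral (hδ₁.1 x) y
  rw [hδ₁.2, hδ₂.2, hδ₂.apply_conj_eq (hcenter x)
      (commute_of_mem_omegaOneUpperCentral hp hc hconj (hδ₂.1 y)),
    (commute_of_mem_center (hcenter x) _).inv_mul_cancel]

/-- Let `G` be a finite `p`-group with `C_G(Φ(G)) ≤ Φ(G)` and `H` the preimage of
`Ω₁(ζ₂(G)/ζ₁(G))`, i.e. `H = {h ∈ ζ₂(G) : h^p ∈ ζ₁(G)}`. Then
`Der(G, H)² ⊆ Hom(G, ζ(G))`: the product `x ↦ δ₂(δ₁(x))` of any two derivations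
`δ₁, δ₂ ∈ Der(G, H)` is a group homomorphism from `G` into the center. -/
theorem der_square_subset_hom_center {G : Type*} [Group G] [Finite G]
    (p : ℕ) (hp : p.Prime) (hG : IsPGroup p G)
    (hc : Subgroup.centralizer (frattini G : Set G) ≤ frattini G) :
    ∀ δ₁ δ₂ : G → G,
      IsDerivationInto {h : G | h ∈ upperCentralSeries G 2 ∧ h ^ p ∈ Subgroup.center G} δ₁ →
      IsDerivationInto {h : G | h ∈ upperCentralSeries G 2 ∧ h ^ p ∈ Subgroup.center G} δ₂ →
      (∀ x : G, δ₂ (δ₁ x) ∈ Subgroup.center G) ∧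
      (∀ x y : G, δ₂ (δ₁ (x * y)) = δ₂ (δ₁ x) * δ₂ (δ₁ y)) :=
  der_square_subset_hom_center_general p hp hc
end

section
/- Let G be a finite p-group with C_G(Φ(G)) ≤ Φ(G) and H the preimage of Ω₁(ζ₂(G)/ζ₁(G)). Then Aut_H(G) is nilpotent of class at most min{r,s} + 1, where p^r = exp(G/γ₂(G)) and p^s = exp(ζ(G)). -/
open scoped commutatorElement in
/-- The left-normed iterated commutator `⁅⁅…⁅f 0, f 1⁆, …⁆, f n⁆` of `n + 1`
elements of a group. -/
def nestedComm {M : Type*} [Group M] : (n : ℕ) → (Fin (n + 1) → M) → M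
  | 0, f => f 0
  | n + 1, f => ⁅nestedComm n fun i => f i.castSucc, f (Fin.last (n + 2 - 1))⁆

/-!
Write `H = omegaZ2 p = {h ∈ ζ₂(G) : hᵖ ∈ ζ(G)}`, `K = omegaZ2Comm p = [G, H]` (central, of
exponent `p`) and `δ_σ = displacement σ : x ↦ x⁻¹ σ(x)`. Every element of `H` centralises
`Φ₀ = commPow p = G'Gᵖ ⊇ Φ(G)`, so `C_G(Φ(G)) ≤ Φ(G)` puts `H` inside `Φ₀` and makes `H` abelian.
Hence, for `σ ∈ Aut_H(G)`, `δ_σ` maps `G'` into `K`, is trivial on `K`, takes values in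
`H_r = omegaZ2Exp p r = {h ∈ H : h^{p^r} ∈ K}` and maps `Φ₀` into the central subgroup `P₁K`,
where `P_k = powSubgroup p r k` is generated by the `p^k`-th powers of elements of `H_r`.

By induction, a left-normed commutator `ρ` of `k + 1 ≥ 2` elements of `Aut_H(G)` has
`δ_ρ(G) ⊆ P_k K ≤ ζ(G)`. Then `δ_ρ` is a homomorphism killing `G'`, and for `h ∈ H_r` we have
`δ_σ(h^{p^k}) = δ_σ(h)^{p^k} ∈ (P₁K)^{p^k} ⊆ P_{k+1}`; so the displacements of `[ρ, σ]` lie in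
`P_{k+1}`. Finally `P_{min r s + 1} = 1`, because `(h^{p^r})ᵖ = 1` and `(hᵖ)^{p^s} = 1` for
`h ∈ H_r`; if `min r s = 0`, also `K = 1`.
-/

open scoped commutatorElement

namespace AutH

open Subgroup hiding upperCentralSeries upperCentralSeries_one mem_upperCentralSeries_succ_iff

variable {G : Type*} [Group G]

theorem commutatorElement_mul_left_of_mem_center {a b c : G} (h : ⁅b, c⁆ ∈ center G) :
    ⁅a * b, c⁆ = ⁅a, c⁆ * ⁅b, c⁆ :=
  calc ⁅a * b, c⁆ = a * ⁅b, c⁆ * a⁻¹ * ⁅a, c⁆ := by group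
    _ = ⁅a, c⁆ * ⁅b, c⁆ := by
      rw [mem_center_iff.mp h a, mul_inv_cancel_right, mem_center_iff.mp h]

theorem commutatorElement_mul_right_of_mem_center {a b c : G} (h : ⁅c, b⁆ ∈ center G) :
    ⁅c, a * b⁆ = ⁅c, a⁆ * ⁅c, b⁆ :=
  calc ⁅c, a * b⁆ = ⁅c, a⁆ * (a * ⁅c, b⁆ * a⁻¹) := by group
    _ = ⁅c, a⁆ * ⁅c, b⁆ := by rw [mem_center_iff.mp h a, mul_inv_cancel_right]

theorem commutatorElement_pow_left_of_mem_center {a c : G} (h : ⁅a, c⁆ ∈ center G) (n : ℕ) :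
    ⁅a ^ n, c⁆ = ⁅a, c⁆ ^ n := by
  induction n with
  | zero => simp
  | succ n ih => rw [pow_succ, commutatorElement_mul_left_of_mem_center h, ih, pow_succ]

theorem commutatorElement_pow_right_of_mem_center {a c : G} (h : ⁅c, a⁆ ∈ center G)
    (n : ℕ) : ⁅c, a ^ n⁆ = ⁅c, a⁆ ^ n := by
  induction n with
  | zero => simp
  | succ n ih => rw [pow_succ, commutatorElement_mul_right_of_mem_center h, ih, pow_succ]

theorem commutatorElement_mem_center_of_left_mem {u : G}
    (hu : u ∈ Subgroup.upperCentralSeries G 2) (g : G) : ⁅u, g⁆ ∈ center G := by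
  simpa [Subgroup.upperCentralSeries_one] using Subgroup.mem_upperCentralSeries_succ_iff.mp hu g

theorem commutatorElement_mem_center_of_right_mem {u : G}
    (hu : u ∈ Subgroup.upperCentralSeries G 2) (g : G) : ⁅g, u⁆ ∈ center G := by
  simpa using inv_mem (commutatorElement_mem_center_of_left_mem hu g)

theorem commutatorElement_commutatorElement_eq_one {h : G}
    (hh : h ∈ Subgroup.upperCentralSeries G 2) (a b : G) : ⁅⁅a, b⁆, h⁆ = 1 := by
  let φ : G →* G := MonoidHom.mk' (⁅·, h⁆) fun a b =>
    commutatorElement_mul_left_of_mem_center (commutatorElement_mem_center_of_right_mem hh b)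
  rw [show ⁅⁅a, b⁆, h⁆ = ⁅φ a, φ b⁆ from map_commutatorElement φ a b,
    commutatorElement_eq_one_iff_commute]
  exact mem_center_iff.mp (commutatorElement_mem_center_of_right_mem hh b) _

theorem mul_pow_of_mem_upperCentralSeries_two {u : G} (hu : u ∈ Subgroup.upperCentralSeries G 2)
    (g : G) (n : ℕ) : (g * u) ^ n = g ^ n * u ^ n * ⁅u, g⁆ ^ n.choose 2 := by
  induction n with
  | zero => simp
  | succ n ih =>
    have hc := commutatorElement_mem_center_of_left_mem hu g
    have hswap : u ^ n * g = g * u ^ n * ⁅u, g⁆ ^ n :=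
      calc u ^ n * g = ⁅u ^ n, g⁆ * (g * u ^ n) := by group
        _ = g * u ^ n * ⁅u ^ n, g⁆ :=
          (mem_center_iff.mp (commutatorElement_mem_center_of_left_mem (pow_mem hu n) g) _).symm
        _ = g * u ^ n * ⁅u, g⁆ ^ n := by rw [commutatorElement_pow_left_of_mem_center hc]
    calc (g * u) ^ (n + 1) = g ^ n * u ^ n * (⁅u, g⁆ ^ n.choose 2 * (g * u)) := by
          rw [pow_succ, ih, mul_assoc]
      _ = g ^ n * (u ^ n * g) * u * ⁅u, g⁆ ^ n.choose 2 := by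
          rw [← mem_center_iff.mp (pow_mem hc _)]; group
      _ = g ^ n * g * u ^ n * (⁅u, g⁆ ^ n * u) * ⁅u, g⁆ ^ n.choose 2 := by rw [hswap]; group
      _ = g ^ (n + 1) * u ^ (n + 1) * ⁅u, g⁆ ^ (n + 1).choose 2 := by
          rw [← mem_center_iff.mp (pow_mem hc n) u, Nat.choose_succ_succ', Nat.choose_one_right,
            pow_add]
          group

theorem pow_mem_of_mem_closure {s : Set G} {S : Subgroup G} (hs : s ⊆ center G) {n : ℕ}
    (hsS : ∀ x ∈ s, x ^ n ∈ S) {z : G} (hz : z ∈ closure s) : z ^ n ∈ S := by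
  have hcen : closure s ≤ center G := (closure_le _).mpr hs
  induction hz using closure_induction with
  | mem x hx => exact hsS x hx
  | one => simp
  | mul x y _ hy ihx ihy =>
    rw [Commute.mul_pow (mem_center_iff.mp (hcen hy) x)]
    exact mul_mem ihx ihy
  | inv x _ ih => simpa using inv_mem ih

theorem mem_zpowers_of_mem_zpowers_of_pow_prime_eq_one {p : ℕ} (hp : p.Prime) {a b : G}
    (hab : a ∈ zpowers b) (ha : a ≠ 1) (hb : b ^ p = 1) : b ∈ zpowers a := by
  have := Fact.mk hp
  obtain ⟨k, rfl⟩ := mem_zpowers_iff.mp hab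
  have hb1 : b ≠ 1 := by rintro rfl; exact ha (one_zpow k)
  have hpk : ¬ (p : ℤ) ∣ k := fun h =>
    ha (orderOf_dvd_iff_zpow_eq_one.mp (orderOf_eq_prime hb hb1 ▸ h))
  rw [mem_zpowers_zpow_iff, orderOf_eq_prime hb hb1]
  exact Int.isCoprime_iff_gcd_eq_one.mp
    ((Nat.prime_iff_prime_int.mp hp).coprime_iff_not_dvd.mpr hpk).symm

def commPow (p : ℕ) : Subgroup G :=
  closure (commutatorSet G ∪ Set.range (· ^ p))

theorem commutator_le_commPow {p : ℕ} : commutator G ≤ commPow p := by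
  rw [commutator_eq_closure]
  exact closure_mono Set.subset_union_left

theorem isCoatom_of_forall_lt_mem {p : ℕ} (hp : p.Prime) {M : Subgroup G} (hM : commPow p ≤ M)
    {x : G} (hx : x ∉ M) (hmax : ∀ N, M < N → x ∈ N) : IsCoatom M := by
  have : M.Normal := commutator_top_left_le_iff.mp <|
    (commutator_mono le_rfl le_top).trans (commutator_le_commPow.trans hM)
  have mem_sup_zpowers (y z : G) :
      z ∈ M ⊔ zpowers y ↔ (z : G ⧸ M) ∈ zpowers (y : G ⧸ M) := by
    have h := comap_map_eq (QuotientGroup.mk' M) (zpowers y)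
    rw [QuotientGroup.ker_mk', MonoidHom.map_zpowers] at h
    rw [sup_comm, ← h]
    rfl
  have hx1 : (x : G ⧸ M) ≠ 1 := by rwa [Ne, QuotientGroup.eq_one_iff]
  refine ⟨fun h => hx (h ▸ mem_top x), fun N hN => eq_top_iff.mpr fun y _ => ?_⟩
  -- Modulo `M` every element has order `1` or `p`, so `x` and any `y ∉ M` generate the same
  -- cyclic subgroup of `G ⧸ M`.
  have hy : y ∈ M ⊔ zpowers x := by
    by_cases hyM : y ∈ M
    · exact mem_sup_left hyM
    rw [mem_sup_zpowers]
    refine mem_zpowers_of_mem_zpowers_of_pow_prime_eq_one hp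
      ((mem_sup_zpowers y x).mp (hmax _ (left_lt_sup.mpr ?_))) hx1 ?_
    · rwa [zpowers_le]
    · rw [← QuotientGroup.mk_pow, QuotientGroup.eq_one_iff]
      exact hM (Subgroup.subset_closure (Or.inr ⟨y, rfl⟩))
  exact sup_le hN.le (zpowers_le.mpr (hmax N hN)) hy

theorem frattini_le_commPow [Finite G] {p : ℕ} (hp : p.Prime) : frattini G ≤ commPow p := by
  intro x hx
  by_contra hxΦ
  obtain ⟨M, ⟨hΦM, hxM⟩, hmax⟩ :=
    (Set.toFinite {N : Subgroup G | commPow p ≤ N ∧ x ∉ N}).exists_maximalFor id _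
      ⟨_, le_rfl, hxΦ⟩
  refine hxM (frattini_le_coatom (isCoatom_of_forall_lt_mem hp hΦM hxM fun N hN => ?_) hx)
  by_contra hxN
  exact hN.not_ge (hmax ⟨hΦM.trans hN.le, hxN⟩ hN.le)

def displacement (σ : MulAut G) (x : G) : G := x⁻¹ * σ x

section displacement

variable {σ : MulAut G}

theorem apply_eq_mul_displacement (σ : MulAut G) (x : G) : σ x = x * displacement σ x := by
  simp [displacement]

theorem eq_one_of_forall_displacement_eq_one (h : ∀ x, displacement σ x = 1) : σ = 1 :=
  MulEquiv.ext fun x => (inv_mul_eq_one.mp (h x)).symm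

theorem displacement_mul_of_mem_center {a : G} (ha : displacement σ a ∈ center G) (b : G) :
    displacement σ (a * b) = displacement σ a * displacement σ b :=
  calc displacement σ (a * b) = b⁻¹ * (displacement σ a * b) * displacement σ b := by
        simp only [displacement, map_mul]; group
    _ = displacement σ a * displacement σ b := by
        rw [← mem_center_iff.mp ha b, inv_mul_cancel_left]

theorem displacement_inv_of_mem_center {a : G} (ha : displacement σ a ∈ center G) :
    displacement σ a⁻¹ = (displacement σ a)⁻¹ :=
  calc displacement σ a⁻¹ = a * (displacement σ a)⁻¹ * a⁻¹ := by
        simp only [displacement, map_inv]; group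
    _ = (displacement σ a)⁻¹ := by rw [mem_center_iff.mp (inv_mem ha) a, mul_inv_cancel_right]

theorem displacement_mem_of_mem_closure {s : Set G} {S : Subgroup G} (hS : S ≤ center G)
    (hsS : ∀ x ∈ s, displacement σ x ∈ S) {z : G} (hz : z ∈ closure s) :
    displacement σ z ∈ S := by
  induction hz using closure_induction with
  | mem x hx => exact hsS x hx
  | one => simp [displacement]
  | mul x y _ _ ihx ihy =>
    rw [displacement_mul_of_mem_center (hS ihx)]
    exact mul_mem ihx ihy
  | inv x _ ih =>
    rw [displacement_inv_of_mem_center (hS ih)]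
    exact inv_mem ih

theorem displacement_pow_of_mem_center {g : G} (h : displacement σ g ∈ center G) (n : ℕ) :
    displacement σ (g ^ n) = displacement σ g ^ n := by
  rw [displacement, map_pow, apply_eq_mul_displacement σ g,
    Commute.mul_pow (mem_center_iff.mp h g), inv_mul_cancel_left]

theorem displacement_pow {g : G} (h : displacement σ g ∈ Subgroup.upperCentralSeries G 2)
    (n : ℕ) : displacement σ (g ^ n) =
      displacement σ g ^ n * ⁅displacement σ g, g⁆ ^ n.choose 2 := by
  rw [displacement, map_pow, apply_eq_mul_displacement σ g,
    mul_pow_of_mem_upperCentralSeries_two h, mul_assoc, inv_mul_cancel_left]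

theorem displacement_commutatorElement {a b : G}
    (ha : displacement σ a ∈ Subgroup.upperCentralSeries G 2)
    (hb : displacement σ b ∈ Subgroup.upperCentralSeries G 2)
    (hab : Commute (displacement σ a) (displacement σ b)) :
    displacement σ ⁅a, b⁆ = ⁅displacement σ a, b⁆ * ⁅a, displacement σ b⁆ := by
  have key : ⁅a * displacement σ a, b * displacement σ b⁆ =
      ⁅a, b⁆ * (⁅displacement σ a, b⁆ * ⁅a, displacement σ b⁆) := by
    rw [commutatorElement_mul_right_of_mem_center
        (commutatorElement_mem_center_of_right_mem hb _),
      commutatorElement_mul_left_of_mem_center (commutatorElement_mem_center_of_left_mem ha _),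
      commutatorElement_mul_left_of_mem_center (commutatorElement_mem_center_of_left_mem ha _),
      commutatorElement_eq_one_iff_commute.mpr hab, mul_one, mul_assoc]
  rw [displacement, map_commutatorElement, apply_eq_mul_displacement σ a,
    apply_eq_mul_displacement σ b, key, inv_mul_cancel_left]

theorem displacement_commutatorElement_eq_one {a b : G}
    (ha : displacement σ a ∈ center G) (hb : displacement σ b ∈ center G) :
    displacement σ ⁅a, b⁆ = 1 := by
  have hZ : center G ≤ Subgroup.upperCentralSeries G 2 :=
    Subgroup.upperCentralSeries_one G ▸ Subgroup.upperCentralSeries_mono G one_le_two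
  rw [displacement_commutatorElement (hZ ha) (hZ hb) (mem_center_iff.mp hb _),
    commutatorElement_eq_one_iff_commute.mpr (mem_center_iff.mp ha b).symm,
    commutatorElement_eq_one_iff_commute.mpr (mem_center_iff.mp hb a), mul_one]

theorem displacement_commutatorElement_mul_apply {τ : MulAut G} {x : G}
    (h : Commute (displacement σ x) (displacement τ x)) :
    displacement ⁅σ, τ⁆ ((τ * σ) x) =
      (displacement τ (displacement σ x))⁻¹ * displacement σ (displacement τ x) := by
  have hστ : ⁅σ, τ⁆ ((τ * σ) x) = σ (τ x) := by simp [commutatorElement_def]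
  have expand : ∀ α β : MulAut G, α (β x) =
      x * displacement α x * displacement β x * displacement α (displacement β x) := by
    intro α β
    rw [apply_eq_mul_displacement β x, map_mul, apply_eq_mul_displacement α x,
      apply_eq_mul_displacement α (displacement β x)]
    group
  rw [displacement, hστ, MulAut.mul_apply, expand, expand, mul_assoc x, ← h.eq]
  group

end displacement

def omegaZ2 (p : ℕ) : Set G :=
  {h | h ∈ Subgroup.upperCentralSeries G 2 ∧ h ^ p ∈ center G}

def omegaZ2Comm (p : ℕ) : Subgroup G :=
  closure (Set.image2 (fun a b : G => ⁅a, b⁆) Set.univ (omegaZ2 p))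

def autOmegaZ2 (p : ℕ) : Set (MulAut G) :=
  {σ | ∀ x, displacement σ x ∈ omegaZ2 p}

section omegaZ2

variable {p : ℕ}

theorem commutatorElement_mem_omegaZ2Comm_of_right_mem {h : G} (hh : h ∈ omegaZ2 p) (g : G) :
    ⁅g, h⁆ ∈ omegaZ2Comm p :=
  Subgroup.subset_closure (Set.mem_image2_of_mem trivial hh)

theorem commutatorElement_mem_omegaZ2Comm_of_left_mem {h : G} (hh : h ∈ omegaZ2 p) (g : G) :
    ⁅h, g⁆ ∈ omegaZ2Comm p := by
  simpa using inv_mem (commutatorElement_mem_omegaZ2Comm_of_right_mem hh g)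

theorem omegaZ2Comm_le_center : omegaZ2Comm p ≤ center G :=
  (closure_le _).mpr <| by
    rintro _ ⟨g, -, h, hh, rfl⟩
    exact commutatorElement_mem_center_of_right_mem hh.1 g

theorem commutatorElement_pow_eq_one_of_mem_omegaZ2 {h : G} (hh : h ∈ omegaZ2 p) (g : G) :
    ⁅g, h⁆ ^ p = 1 := by
  rw [← commutatorElement_pow_right_of_mem_center
    (commutatorElement_mem_center_of_right_mem hh.1 g), commutatorElement_eq_one_iff_commute]
  exact mem_center_iff.mp hh.2 g

theorem pow_eq_one_of_mem_omegaZ2Comm {w : G} (hw : w ∈ omegaZ2Comm p) : w ^ p = 1 := by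
  refine mem_bot.mp (pow_mem_of_mem_closure
    (fun _ hx => omegaZ2Comm_le_center (Subgroup.subset_closure hx)) ?_ hw)
  rintro _ ⟨g, -, h, hh, rfl⟩
  exact mem_bot.mpr (commutatorElement_pow_eq_one_of_mem_omegaZ2 hh g)

theorem commute_of_mem_omegaZ2_of_mem_commPow {h t : G} (hh : h ∈ omegaZ2 p)
    (ht : t ∈ commPow p) : Commute h t := by
  induction ht using closure_induction with
  | mem t ht =>
    refine (commutatorElement_eq_one_iff_commute.mp ?_).symm
    rcases ht with ⟨a, b, rfl⟩ | ⟨g, rfl⟩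
    · exact commutatorElement_commutatorElement_eq_one hh.1 a b
    · rw [commutatorElement_pow_left_of_mem_center
        (commutatorElement_mem_center_of_right_mem hh.1 g)]
      exact commutatorElement_pow_eq_one_of_mem_omegaZ2 hh g
  | one => exact Commute.one_right h
  | mul _ _ _ _ h₁ h₂ => exact h₁.mul_right h₂
  | inv _ _ h₁ => exact h₁.inv_right

theorem mem_commPow_of_mem_omegaZ2 [Finite G] (hp : p.Prime)
    (hc : centralizer (frattini G : Set G) ≤ frattini G) {h : G} (hh : h ∈ omegaZ2 p) :
    h ∈ commPow p :=
  frattini_le_commPow hp <| hc <| mem_centralizer_iff.mpr fun _ hg =>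
    (commute_of_mem_omegaZ2_of_mem_commPow hh (frattini_le_commPow hp hg)).eq.symm

theorem commute_of_mem_omegaZ2 [Finite G] (hp : p.Prime)
    (hc : centralizer (frattini G : Set G) ≤ frattini G) {h h' : G} (hh : h ∈ omegaZ2 p)
    (hh' : h' ∈ omegaZ2 p) : Commute h h' :=
  commute_of_mem_omegaZ2_of_mem_commPow hh (mem_commPow_of_mem_omegaZ2 hp hc hh')

end omegaZ2

section autOmegaZ2

variable [Finite G] {p : ℕ} {σ : MulAut G}

theorem displacement_commutatorElement_mem_omegaZ2Comm (hp : p.Prime)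
    (hc : centralizer (frattini G : Set G) ≤ frattini G) (hσ : σ ∈ autOmegaZ2 p) (a b : G) :
    displacement σ ⁅a, b⁆ ∈ omegaZ2Comm p := by
  rw [displacement_commutatorElement (hσ a).1 (hσ b).1
    (commute_of_mem_omegaZ2 hp hc (hσ a) (hσ b))]
  exact mul_mem (commutatorElement_mem_omegaZ2Comm_of_left_mem (hσ a) b)
    (commutatorElement_mem_omegaZ2Comm_of_right_mem (hσ b) a)

theorem displacement_mem_omegaZ2Comm_of_mem_commutator (hp : p.Prime)
    (hc : centralizer (frattini G : Set G) ≤ frattini G) (hσ : σ ∈ autOmegaZ2 p) {t : G}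
    (ht : t ∈ commutator G) : displacement σ t ∈ omegaZ2Comm p := by
  rw [commutator_eq_closure] at ht
  refine displacement_mem_of_mem_closure omegaZ2Comm_le_center ?_ ht
  rintro _ ⟨a, b, rfl⟩
  exact displacement_commutatorElement_mem_omegaZ2Comm hp hc hσ a b

theorem displacement_mem_of_mem_commPow (hp : p.Prime)
    (hc : centralizer (frattini G : Set G) ≤ frattini G) (hσ : σ ∈ autOmegaZ2 p)
    {S : Subgroup G} (hS : S ≤ center G) (hpow : ∀ g, displacement σ g ^ p ∈ S)
    (hK : omegaZ2Comm p ≤ S) {t : G} (ht : t ∈ commPow p) : displacement σ t ∈ S := by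
  refine displacement_mem_of_mem_closure hS ?_ ht
  rintro _ (⟨a, b, rfl⟩ | ⟨g, rfl⟩)
  · exact hK (displacement_commutatorElement_mem_omegaZ2Comm hp hc hσ a b)
  · rw [displacement_pow (hσ g).1]
    exact mul_mem (hpow g)
      (hK (pow_mem (commutatorElement_mem_omegaZ2Comm_of_left_mem (hσ g) g) _))

theorem displacement_mem_center_of_mem_commPow (hp : p.Prime)
    (hc : centralizer (frattini G : Set G) ≤ frattini G) (hσ : σ ∈ autOmegaZ2 p) {t : G}
    (ht : t ∈ commPow p) : displacement σ t ∈ center G :=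
  displacement_mem_of_mem_commPow hp hc hσ le_rfl (fun g => (hσ g).2) omegaZ2Comm_le_center ht

theorem displacement_eq_one_of_mem_omegaZ2Comm (hp : p.Prime)
    (hc : centralizer (frattini G : Set G) ≤ frattini G) (hσ : σ ∈ autOmegaZ2 p) {w : G}
    (hw : w ∈ omegaZ2Comm p) : displacement σ w = 1 := by
  refine mem_bot.mp (displacement_mem_of_mem_closure bot_le ?_ hw)
  rintro _ ⟨g, -, h, hh, rfl⟩
  have hδh :=
    displacement_mem_center_of_mem_commPow hp hc hσ (mem_commPow_of_mem_omegaZ2 hp hc hh)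
  rw [displacement_commutatorElement (hσ g).1 (hσ h).1
      (commute_of_mem_omegaZ2 hp hc (hσ g) (hσ h)),
    commutatorElement_eq_one_iff_commute.mpr (commute_of_mem_omegaZ2 hp hc (hσ g) hh),
    commutatorElement_eq_one_iff_commute.mpr (mem_center_iff.mp hδh g), mul_one]
  exact one_mem _

end autOmegaZ2

def omegaZ2Exp (p r : ℕ) : Set G :=
  {h | h ∈ omegaZ2 p ∧ h ^ p ^ r ∈ omegaZ2Comm p}

def powSubgroup (p r k : ℕ) : Subgroup G :=
  closure ((· ^ p ^ k) '' omegaZ2Exp p r)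

section powSubgroup

variable {p r : ℕ}

theorem pow_pow_mem_commutator (hr : Monoid.exponent (G ⧸ commutator G) = p ^ r) (g : G) :
    g ^ p ^ r ∈ commutator G := by
  rw [← QuotientGroup.eq_one_iff, QuotientGroup.mk_pow, ← hr]
  exact Monoid.pow_exponent_eq_one _

theorem pow_pow_eq_one_of_mem_center {s : ℕ} (hs : Monoid.exponent (center G) = p ^ s) {z : G}
    (hz : z ∈ center G) : z ^ p ^ s = 1 := by
  simpa [hs] using congrArg Subtype.val (Monoid.pow_exponent_eq_one (⟨z, hz⟩ : center G))

theorem powSubgroup_succ_le_center {k : ℕ} : powSubgroup p r (k + 1) ≤ center G :=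
  (closure_le _).mpr <| by
    rintro _ ⟨h, hh, rfl⟩
    simp only [SetLike.mem_coe, pow_succ', pow_mul]
    exact pow_mem hh.1.2 _

theorem pow_mem_powSubgroup {k j : ℕ} {z : G}
    (hz : z ∈ powSubgroup p r (k + 1) ⊔ omegaZ2Comm p) :
    z ^ p ^ (j + 1) ∈ powSubgroup p r (k + j + 2) := by
  rw [powSubgroup, omegaZ2Comm, ← Subgroup.closure_union] at hz
  refine pow_mem_of_mem_closure (Set.union_subset
    (fun _ hx => powSubgroup_succ_le_center (Subgroup.subset_closure hx))
    (fun _ hx => omegaZ2Comm_le_center (Subgroup.subset_closure hx))) ?_ hz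
  rintro _ (⟨h, hh, rfl⟩ | ⟨g, -, h, hh, rfl⟩)
  · rw [← pow_mul, ← pow_add]
    exact Subgroup.subset_closure ⟨h, hh, by ring_nf⟩
  · rw [pow_succ', pow_mul, commutatorElement_pow_eq_one_of_mem_omegaZ2 hh, one_pow]
    exact one_mem _

theorem powSubgroup_min_succ_eq_bot {s : ℕ} (hs : Monoid.exponent (center G) = p ^ s) :
    (powSubgroup p r (min r s + 1) : Subgroup G) = ⊥ := by
  rw [eq_bot_iff, powSubgroup, closure_le]
  rintro _ ⟨h, hh, rfl⟩
  simp only [SetLike.mem_coe, mem_bot]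
  rcases min_choice r s with hm | hm <;> rw [hm]
  · rw [pow_succ, pow_mul, pow_eq_one_of_mem_omegaZ2Comm hh.2]
  · rw [pow_succ', pow_mul, pow_pow_eq_one_of_mem_center hs hh.1.2]

theorem omegaZ2Comm_eq_bot_of_min_eq_zero {s : ℕ}
    (hr : Monoid.exponent (G ⧸ commutator G) = p ^ r)
    (hs : Monoid.exponent (center G) = p ^ s) (h0 : min r s = 0) :
    omegaZ2Comm p = (⊥ : Subgroup G) := by
  rw [eq_bot_iff]
  rcases Nat.min_eq_zero_iff.mp h0 with rfl | rfl
  · rw [omegaZ2Comm, closure_le]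
    rintro _ ⟨g, -, h, hh, rfl⟩
    have hg : g ∈ commPow p := commutator_le_commPow (by simpa using pow_pow_mem_commutator hr g)
    exact mem_bot.mpr (commutatorElement_eq_one_iff_commute.mpr
      (commute_of_mem_omegaZ2_of_mem_commPow hh hg).symm)
  · intro w hw
    simpa using pow_pow_eq_one_of_mem_center hs (omegaZ2Comm_le_center hw)

theorem displacement_mem_powSubgroup_of_mem_commPow {k : ℕ} {ρ : MulAut G}
    (hρ : ∀ x, displacement ρ x ∈ powSubgroup p r (k + 1) ⊔ omegaZ2Comm p) {t : G}
    (ht : t ∈ commPow p) : displacement ρ t ∈ powSubgroup p r (k + 2) := by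
  have hρZ : ∀ x, displacement ρ x ∈ center G :=
    fun x => sup_le powSubgroup_succ_le_center omegaZ2Comm_le_center (hρ x)
  refine displacement_mem_of_mem_closure powSubgroup_succ_le_center ?_ ht
  rintro _ (⟨a, b, rfl⟩ | ⟨g, rfl⟩)
  · rw [displacement_commutatorElement_eq_one (hρZ a) (hρZ b)]
    exact one_mem _
  · dsimp only
    rw [displacement_pow_of_mem_center (hρZ g)]
    simpa using pow_mem_powSubgroup (j := 0) (hρ g)

end powSubgroup

section levels

variable [Finite G] {p r : ℕ}

theorem displacement_mem_omegaZ2Exp (hp : p.Prime)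
    (hc : centralizer (frattini G : Set G) ≤ frattini G)
    (hr : Monoid.exponent (G ⧸ commutator G) = p ^ r) {σ : MulAut G} (hσ : σ ∈ autOmegaZ2 p)
    (x : G) : displacement σ x ∈ omegaZ2Exp p r := by
  refine ⟨hσ x, ?_⟩
  rw [eq_mul_inv_of_mul_eq (displacement_pow (hσ x).1 (p ^ r)).symm]
  exact mul_mem
    (displacement_mem_omegaZ2Comm_of_mem_commutator hp hc hσ (pow_pow_mem_commutator hr x))
    (inv_mem (pow_mem (commutatorElement_mem_omegaZ2Comm_of_left_mem (hσ x) x) _))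

theorem displacement_mem_powSubgroup_one_sup_of_mem_commPow (hp : p.Prime)
    (hc : centralizer (frattini G : Set G) ≤ frattini G)
    (hr : Monoid.exponent (G ⧸ commutator G) = p ^ r) {σ : MulAut G} (hσ : σ ∈ autOmegaZ2 p)
    {t : G} (ht : t ∈ commPow p) : displacement σ t ∈ powSubgroup p r 1 ⊔ omegaZ2Comm p :=
  displacement_mem_of_mem_commPow hp hc hσ
    (sup_le powSubgroup_succ_le_center omegaZ2Comm_le_center)
    (fun g => mem_sup_left (Subgroup.subset_closure
      ⟨_, displacement_mem_omegaZ2Exp hp hc hr hσ g, by simp⟩)) le_sup_right ht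

theorem displacement_commutatorElement_mem_powSubgroup_one_sup (hp : p.Prime)
    (hc : centralizer (frattini G : Set G) ≤ frattini G)
    (hr : Monoid.exponent (G ⧸ commutator G) = p ^ r) {σ τ : MulAut G}
    (hσ : σ ∈ autOmegaZ2 p) (hτ : τ ∈ autOmegaZ2 p) (y : G) :
    displacement ⁅σ, τ⁆ y ∈ powSubgroup p r 1 ⊔ omegaZ2Comm p := by
  obtain ⟨x, rfl⟩ := (τ * σ).surjective y
  rw [displacement_commutatorElement_mul_apply (commute_of_mem_omegaZ2 hp hc (hσ x) (hτ x))]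
  exact mul_mem
    (inv_mem (displacement_mem_powSubgroup_one_sup_of_mem_commPow hp hc hr hτ
      (mem_commPow_of_mem_omegaZ2 hp hc (hσ x))))
    (displacement_mem_powSubgroup_one_sup_of_mem_commPow hp hc hr hσ
      (mem_commPow_of_mem_omegaZ2 hp hc (hτ x)))

theorem displacement_mem_powSubgroup_of_mem_sup (hp : p.Prime)
    (hc : centralizer (frattini G : Set G) ≤ frattini G)
    (hr : Monoid.exponent (G ⧸ commutator G) = p ^ r) {k : ℕ} {σ : MulAut G}
    (hσ : σ ∈ autOmegaZ2 p) {z : G} (hz : z ∈ powSubgroup p r (k + 1) ⊔ omegaZ2Comm p) :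
    displacement σ z ∈ powSubgroup p r (k + 2) := by
  rw [powSubgroup, omegaZ2Comm, ← Subgroup.closure_union] at hz
  refine displacement_mem_of_mem_closure powSubgroup_succ_le_center ?_ hz
  rintro _ (⟨h, hh, rfl⟩ | hw)
  · have hh' := mem_commPow_of_mem_omegaZ2 hp hc hh.1
    dsimp only
    rw [displacement_pow_of_mem_center (displacement_mem_center_of_mem_commPow hp hc hσ hh')]
    simpa using pow_mem_powSubgroup (k := 0) (j := k)
      (displacement_mem_powSubgroup_one_sup_of_mem_commPow hp hc hr hσ hh')
  · rw [displacement_eq_one_of_mem_omegaZ2Comm hp hc hσ (Subgroup.subset_closure hw)]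
    exact one_mem _

theorem displacement_commutatorElement_mem_powSubgroup (hp : p.Prime)
    (hc : centralizer (frattini G : Set G) ≤ frattini G)
    (hr : Monoid.exponent (G ⧸ commutator G) = p ^ r) {k : ℕ} {ρ σ : MulAut G}
    (hρ : ∀ x, displacement ρ x ∈ powSubgroup p r (k + 1) ⊔ omegaZ2Comm p)
    (hσ : σ ∈ autOmegaZ2 p) (y : G) :
    displacement ⁅ρ, σ⁆ y ∈ powSubgroup p r (k + 2) := by
  obtain ⟨x, rfl⟩ := (σ * ρ).surjective y
  have hρx : displacement ρ x ∈ center G :=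
    sup_le powSubgroup_succ_le_center omegaZ2Comm_le_center (hρ x)
  rw [displacement_commutatorElement_mul_apply (mem_center_iff.mp hρx _).symm]
  exact mul_mem (inv_mem (displacement_mem_powSubgroup_of_mem_sup hp hc hr hσ (hρ x)))
    (displacement_mem_powSubgroup_of_mem_commPow hρ (mem_commPow_of_mem_omegaZ2 hp hc (hσ x)))

theorem displacement_nestedComm_mem (hp : p.Prime)
    (hc : centralizer (frattini G : Set G) ≤ frattini G)
    (hr : Monoid.exponent (G ⧸ commutator G) = p ^ r) :
    ∀ (n : ℕ) (f : Fin (n + 2) → MulAut G), (∀ i, f i ∈ autOmegaZ2 p) →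
      ∀ x, displacement (nestedComm (n + 1) f) x ∈ powSubgroup p r (n + 1) ⊔ omegaZ2Comm p
  | 0, _, hf => displacement_commutatorElement_mem_powSubgroup_one_sup hp hc hr (hf _) (hf _)
  | n + 1, _, hf => fun _ => mem_sup_left <| displacement_commutatorElement_mem_powSubgroup hp hc hr
      (displacement_nestedComm_mem hp hc hr n _ fun _ => hf _) (hf _) _

end levels

end AutH

open AutH

theorem autH_nilpotent_of_class_le_general {G : Type*} [Group G] [Finite G]
    (p r s : ℕ) (hp : p.Prime)
    (hc : Subgroup.centralizer (frattini G : Set G) ≤ frattini G)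
    (hr : Monoid.exponent (G ⧸ commutator G) = p ^ r)
    (hs : Monoid.exponent (Subgroup.center G) = p ^ s) :
    ∀ f : Fin (min r s + 2) → MulAut G,
      (∀ i, ∀ x : G,
        x⁻¹ * f i x ∈ upperCentralSeries G 2 ∧ (x⁻¹ * f i x) ^ p ∈ Subgroup.center G) →
      nestedComm (min r s + 1) f = 1 := by
  have hbot : (powSubgroup p r (min r s + 1) : Subgroup G) = ⊥ := powSubgroup_min_succ_eq_bot hs
  rcases hm : min r s with _ | k <;> rw [hm] at hbot <;> intro f hf
  · have hy := displacement_nestedComm_mem hp hc hr 0 f hf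
    rw [hbot, omegaZ2Comm_eq_bot_of_min_eq_zero hr hs hm, sup_bot_eq] at hy
    exact eq_one_of_forall_displacement_eq_one fun y => Subgroup.mem_bot.mp (hy y)
  · exact eq_one_of_forall_displacement_eq_one fun y => Subgroup.mem_bot.mp <| hbot.le <|
      displacement_commutatorElement_mem_powSubgroup hp hc hr
        (displacement_nestedComm_mem hp hc hr k _ fun _ => hf _) (hf _) y

/-- Let `G` be a finite `p`-group with `C_G(Φ(G)) ≤ Φ(G)` and let `H` be the
preimage of `Ω₁(ζ₂(G)/ζ₁(G))`, i.e. `H = {h ∈ ζ₂(G) : h^p ∈ ζ₁(G)}`. If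
`p^r = exp(G/γ₂(G))` and `p^s = exp(ζ(G))`, then `Aut_H(G)` is nilpotent of class
at most `min r s + 1`: every left-normed commutator of `min r s + 2` elements of
`Aut_H(G)` is trivial. -/
theorem autH_nilpotent_of_class_le {G : Type*} [Group G] [Finite G]
    (p r s : ℕ) (hp : p.Prime) (hG : IsPGroup p G)
    (hc : Subgroup.centralizer (frattini G : Set G) ≤ frattini G)
    (hr : Monoid.exponent (G ⧸ commutator G) = p ^ r)
    (hs : Monoid.exponent (Subgroup.center G) = p ^ s) :
    ∀ f : Fin (min r s + 2) → MulAut G,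
      (∀ i, ∀ x : G,
        x⁻¹ * f i x ∈ upperCentralSeries G 2 ∧ (x⁻¹ * f i x) ^ p ∈ Subgroup.center G) →
      nestedComm (min r s + 1) f = 1 :=
  autH_nilpotent_of_class_le_general p r s hp hc hr hs
end

section
/- Let p be an odd prime and G a finite p-group that is 2-generated (d(G) = 2) and not powerful. Then G is full with respect to every maximal subgroup: for each maximal subgroup C and each maximal subgroup M ≠ C, there exists a subgroup K ≤ M of index p² in G that is not normal in G, such that K ∩ C is normal in G and contains G^p. -/
/-!
Let `N = γ₃(G) G^p`; it lies in every maximal subgroup, since maximal subgroups of a `p`-group are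
normal of index `p`. The quotient `G ⧸ N` is generated by two elements, has exponent `p` and class
at most two, and it is not abelian: `γ₂ ≤ γ₃ G^p` would give `γ₂ ≤ G^p` in the nilpotent group `G`.
Hence `|G ⧸ N| = p³`: the commutator of the generators is central of order `p`, and modulo it the
group is abelian on two generators of order `p`.

Given maximal subgroups `M ≠ C`, pick `x ∈ M \ C` and let `K / N = ⟨xN⟩`. It has order `p`, so
index `p²`, and it meets `C / N` trivially, so `K ∩ C = N`. If `K` were normal, `G ⧸ K` would have
order `p²` and be abelian, putting `γ₂(G ⧸ N)` inside `⟨xN⟩ ∩ C / N = 1`.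
-/

open Subgroup
open scoped commutatorElement

def powerSubgroup (G : Type*) [Group G] (n : ℕ) : Subgroup G :=
  closure {g : G | ∃ x : G, g = x ^ n}

section

variable {G : Type*} [Group G]

instance powerSubgroup_normal (n : ℕ) : (powerSubgroup G n).Normal := by
  refine ⟨fun h hh g => ?_⟩
  have hconj : MulAut.conj g '' {g : G | ∃ x : G, g = x ^ n} ⊆ {g : G | ∃ x : G, g = x ^ n} := by
    rintro _ ⟨_, ⟨x, rfl⟩, rfl⟩
    exact ⟨g * x * g⁻¹, by simp [conj_pow]⟩
  have hmem : g * h * g⁻¹ ∈ (powerSubgroup G n).map (MulAut.conj g).toMonoidHom := ⟨h, hh, rfl⟩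
  rw [powerSubgroup, MonoidHom.map_closure] at hmem
  exact closure_mono hconj hmem

theorem pow_eq_one_of_powerSubgroup_le {n : ℕ} {N : Subgroup G} [N.Normal]
    (h : powerSubgroup G n ≤ N) (g : G ⧸ N) : g ^ n = 1 := by
  obtain ⟨x, rfl⟩ := QuotientGroup.mk'_surjective N g
  rw [← map_pow, QuotientGroup.mk'_apply, QuotientGroup.eq_one_iff]
  exact h (subset_closure ⟨x, rfl⟩)

theorem normal_of_le_center {Z : Subgroup G} (h : Z ≤ center G) : Z.Normal :=
  ⟨fun z hz g => by rw [mem_center_iff.mp (h hz) g, mul_inv_cancel_right]; exact hz⟩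

theorem commutator_le_of_isCoatom {M : Subgroup G} [M.Normal] (hM : IsCoatom M) :
    commutator G ≤ M := by
  obtain ⟨g, -, hg⟩ := SetLike.exists_of_lt hM.lt_top
  refine Normal.commutator_le_of_self_sup_commutative_eq_top (H := zpowers g) (hM.2 _ ?_)
    inferInstance
  exact lt_of_le_of_ne le_sup_left fun h => hg (h ▸ mem_sup_right (mem_zpowers g))

theorem map_commutator_of_surjective {H : Type*} [Group H] {f : G →* H}
    (hf : Function.Surjective f) : (commutator G).map f = commutator H := by
  rw [map_commutator_eq, f.range_eq_top.mpr hf, _root_.commutator_def]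

theorem eq_bot_of_le_commutator_top [Group.IsNilpotent G] {H : Subgroup G}
    (h : H ≤ ⁅H, (⊤ : Subgroup G)⁆) : H = ⊥ := by
  have hle : ∀ n, H ≤ (⊤ : Subgroup G).lowerCentralSeries n := by
    intro n
    induction n with
    | zero => exact le_top
    | succ n ih => exact h.trans (commutator_mono ih le_rfl)
  obtain ⟨n, hn⟩ := Subgroup.nilpotent_iff_lowerCentralSeries.mp ‹Group.IsNilpotent G›
  exact le_bot_iff.mp (hn ▸ hle n)

theorem commutator_le_of_le_commutator_top_sup [Group.IsNilpotent G] {P : Subgroup G} [P.Normal]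
    (h : commutator G ≤ ⁅commutator G, (⊤ : Subgroup G)⁆ ⊔ P) : commutator G ≤ P := by
  have hf := QuotientGroup.mk'_surjective P
  set f := QuotientGroup.mk' P
  have hQ : commutator (G ⧸ P) ≤ ⁅commutator (G ⧸ P), (⊤ : Subgroup (G ⧸ P))⁆ := by
    rw [← map_commutator_of_surjective hf, ← map_top_of_surjective f hf, ← map_commutator]
    calc _ ≤ (⁅commutator G, (⊤ : Subgroup G)⁆ ⊔ P).map f := map_mono h
      _ = _ := by
        rw [Subgroup.map_sup, (Subgroup.map_eq_bot_iff _).mpr (QuotientGroup.ker_mk' P).ge,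
          sup_bot_eq]
  rw [← QuotientGroup.ker_mk' P, ← Subgroup.map_eq_bot_iff, map_commutator_of_surjective hf]
  exact eq_bot_of_le_commutator_top hQ

theorem isMulCommutative_of_closure_eq_top {k : Set G}
    (hcomm : ∀ x ∈ k, ∀ y ∈ k, x * y = y * x) (h : closure k = ⊤) : IsMulCommutative G := by
  have := isMulCommutative_closure hcomm
  refine ⟨⟨fun x y => ?_⟩⟩
  simpa using congrArg Subtype.val
    (mul_comm' (⟨x, h ▸ mem_top x⟩ : closure k) ⟨y, h ▸ mem_top y⟩)

theorem card_le_orderOf_mul_orderOf [Finite G] [IsMulCommutative G] {a b : G}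
    (h : closure {a, b} = ⊤) : Nat.card G ≤ orderOf a * orderOf b := by
  have hsurj : Function.Surjective fun q : zpowers a × zpowers b => (q.1 : G) * q.2 := by
    intro g
    have hg : g ∈ zpowers a ⊔ zpowers b := by
      rw [zpowers_eq_closure, zpowers_eq_closure, ← Subgroup.closure_union, ← Set.insert_eq, h]
      exact mem_top g
    obtain ⟨y, hy, z, hz, rfl⟩ := mem_sup_of_normal_right.mp hg
    exact ⟨(⟨y, hy⟩, ⟨z, hz⟩), rfl⟩
  calc Nat.card G ≤ Nat.card (zpowers a × zpowers b) := Nat.card_le_card_of_surjective _ hsurj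
    _ = orderOf a * orderOf b := by rw [Nat.card_prod, Nat.card_zpowers, Nat.card_zpowers]

theorem card_le_pow_three_of_pow_eq_one {p : ℕ} (hp : 0 < p) [Finite G] {a b : G}
    (hexp : ∀ g : G, g ^ p = 1) (hgen : closure {a, b} = ⊤)
    (hclass : ⁅commutator G, (⊤ : Subgroup G)⁆ = ⊥) : Nat.card G ≤ p ^ 3 := by
  set Z := zpowers (⁅a, b⁆ : G)
  have hZ : Z ≤ center G := by
    rw [zpowers_le, ← centralizer_univ, ← coe_top]
    exact commutator_eq_bot_iff_le_centralizer.mp hclass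
      (commutator_mem_commutator (mem_top a) (mem_top b))
  have := normal_of_le_center hZ
  set f := QuotientGroup.mk' Z
  have hgenQ : closure {f a, f b} = ⊤ := by
    rw [← Set.image_pair, ← MonoidHom.map_closure, hgen,
      map_top_of_surjective f (QuotientGroup.mk'_surjective Z)]
  have : IsMulCommutative (G ⧸ Z) := by
    have hab : f a * f b = f b * f a := by
      rw [← commutatorElement_eq_one_iff_mul_comm, ← map_commutatorElement,
        QuotientGroup.mk'_apply, QuotientGroup.eq_one_iff]
      exact mem_zpowers _
    refine isMulCommutative_of_closure_eq_top ?_ hgenQ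
    rintro x (rfl | rfl) y (rfl | rfl) <;> first | rfl | exact hab | exact hab.symm
  have horder : ∀ g : G ⧸ Z, orderOf g ≤ p := fun g => by
    obtain ⟨x, rfl⟩ := QuotientGroup.mk'_surjective Z g
    exact orderOf_le_of_pow_eq_one hp (by rw [← map_pow, hexp, map_one])
  calc Nat.card G = orderOf (⁅a, b⁆ : G) * Nat.card (G ⧸ Z) := by
        rw [← Nat.card_zpowers, ← index_eq_card, card_mul_index]
    _ ≤ p * (orderOf (f a) * orderOf (f b)) :=
        Nat.mul_le_mul (orderOf_le_of_pow_eq_one hp (hexp _)) (card_le_orderOf_mul_orderOf hgenQ)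
    _ ≤ p * (p * p) := Nat.mul_le_mul_left p (Nat.mul_le_mul (horder _) (horder _))
    _ = p ^ 3 := by ring

variable {p : ℕ} [Fact p.Prime]

theorem IsPGroup.prime_pow_three_le_card [Finite G] (hG : IsPGroup p G)
    (h : commutator G ≠ ⊥) : p ^ 3 ≤ Nat.card G := by
  obtain ⟨n, hn⟩ := IsPGroup.iff_card.mp hG
  rw [hn]
  refine Nat.pow_le_pow_right (Fact.out : p.Prime).pos ?_
  by_contra! hlt
  apply h
  rw [commutator_eq_bot_iff]
  interval_cases n
  · exact ⟨⟨fun x y => (Nat.card_eq_one_iff_unique.mp hn).1.elim _ _⟩⟩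
  · have := isCyclic_of_prime_card (hn.trans (pow_one p))
    infer_instance
  · exact IsPGroup.isMulCommutative_of_card_eq_prime_sq hn

theorem IsPGroup.index_eq_of_isCoatom [Finite G] (hG : IsPGroup p G) {M : Subgroup G}
    (hM : IsCoatom M) : M.index = p := by
  have hp := (Fact.out : p.Prime)
  obtain ⟨n, hn⟩ := IsPGroup.iff_card.mp (hG.to_subgroup M)
  obtain ⟨k, hk⟩ := hG.index M
  have hk0 : k ≠ 0 := by
    rintro rfl
    exact hM.1 (index_eq_one.mp (hk.trans (pow_zero p)))
  have hcard : Nat.card G = p ^ n * p ^ k := by rw [← M.card_mul_index, hn, hk]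
  obtain ⟨K, hK, hMK⟩ := Sylow.exists_subgroup_card_pow_succ (H := M)
    (by rw [hcard, pow_succ]; exact mul_dvd_mul_left _ (dvd_pow_self p hk0)) hn
  have hMK' : M ≠ K := by
    rintro rfl
    exact n.succ_ne_self (Nat.pow_right_injective hp.two_le (hK.symm.trans hn))
  rw [hM.2 K (lt_of_le_of_ne hMK hMK'), card_top, hcard, pow_succ] at hK
  rw [hk, Nat.eq_of_mul_eq_mul_left (pow_pos hp.pos n) hK]

theorem IsPGroup.normal_of_isCoatom [Finite G] (hG : IsPGroup p G) {M : Subgroup G}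
    (hM : IsCoatom M) : M.Normal :=
  NormalizerCondition.normal_of_coatom M
    (Group.normalizerCondition_of_isNilpotent (h := hG.isNilpotent)) hM

theorem IsPGroup.commutator_le_of_isCoatom [Finite G] (hG : IsPGroup p G) {M : Subgroup G}
    (hM : IsCoatom M) : commutator G ≤ M :=
  have := hG.normal_of_isCoatom hM
  _root_.commutator_le_of_isCoatom hM

theorem IsPGroup.commutator_top_sup_powerSubgroup_le_of_isCoatom [Finite G] (hG : IsPGroup p G)
    {M : Subgroup G} (hM : IsCoatom M) :
    ⁅commutator G, (⊤ : Subgroup G)⁆ ⊔ powerSubgroup G p ≤ M := by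
  have := hG.normal_of_isCoatom hM
  refine sup_le ((commutator_le_left _ _).trans (hG.commutator_le_of_isCoatom hM)) ?_
  rw [powerSubgroup, closure_le]
  rintro _ ⟨x, rfl⟩
  rw [← hG.index_eq_of_isCoatom hM]
  exact M.pow_index_mem x

theorem zpowers_inf_eq_bot_of_notMem {y : G} (hy : orderOf y = p) {D : Subgroup G}
    (hyD : y ∉ D) : zpowers y ⊓ D = ⊥ := by
  have hdvd : Nat.card (zpowers y ⊓ D : Subgroup G) ∣ p :=
    hy ▸ Nat.card_zpowers y ▸ card_dvd_of_le inf_le_left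
  rcases (Fact.out : p.Prime).eq_one_or_self_of_dvd _ hdvd with hone | hfull
  · exact card_eq_one.mp hone
  · have : Finite (zpowers y) :=
      Nat.finite_of_card_ne_zero (by rw [Nat.card_zpowers, hy]; exact (Fact.out : p.Prime).ne_zero)
    have heq := eq_of_le_of_card_ge (inf_le_left : zpowers y ⊓ D ≤ _)
      (by rw [hfull, Nat.card_zpowers, hy])
    exact absurd ((heq.ge.trans inf_le_right) (mem_zpowers y)) hyD

theorem index_zpowers_of_card_eq_pow_three (hcard : Nat.card G = p ^ 3) {y : G}
    (hy : orderOf y = p) : (zpowers y).index = p ^ 2 := by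
  have h := (zpowers y).card_mul_index
  rw [Nat.card_zpowers, hy, hcard, pow_succ' p 2] at h
  exact Nat.eq_of_mul_eq_mul_left (Fact.out : p.Prime).pos h

theorem not_normal_zpowers_of_notMem (hcard : Nat.card G = p ^ 3)
    (hnab : commutator G ≠ ⊥) {D : Subgroup G} (hD : commutator G ≤ D) {y : G}
    (hy : orderOf y = p) (hyD : y ∉ D) : ¬ (zpowers y).Normal := by
  intro hn
  have hquot : Nat.card (G ⧸ zpowers y) = p ^ 2 := by
    rw [← index_eq_card, index_zpowers_of_card_eq_pow_three hcard hy]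
  have hle : commutator G ≤ zpowers y :=
    Normal.quotient_commutative_iff_commutator_le.mp
      (IsPGroup.isMulCommutative_of_card_eq_prime_sq hquot)
  exact hnab (le_bot_iff.mp ((le_inf hle hD).trans (zpowers_inf_eq_bot_of_notMem hy hyD).le))

theorem IsPGroup.commutator_quotient_ne_bot [Finite G] (hG : IsPGroup p G)
    (hnp : ¬ commutator G ≤ powerSubgroup G p) :
    commutator (G ⧸ (⁅commutator G, (⊤ : Subgroup G)⁆ ⊔ powerSubgroup G p)) ≠ ⊥ := by
  have := hG.isNilpotent
  rw [← map_commutator_of_surjective (QuotientGroup.mk'_surjective _), Ne,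
    Subgroup.map_eq_bot_iff, QuotientGroup.ker_mk']
  exact fun h => hnp (commutator_le_of_le_commutator_top_sup h)

theorem IsPGroup.card_quotient_eq_prime_pow_three [Finite G] (hG : IsPGroup p G)
    {a b : G} (hgen : closure {a, b} = ⊤) (hnp : ¬ commutator G ≤ powerSubgroup G p) :
    Nat.card (G ⧸ (⁅commutator G, (⊤ : Subgroup G)⁆ ⊔ powerSubgroup G p)) = p ^ 3 := by
  set N := ⁅commutator G, (⊤ : Subgroup G)⁆ ⊔ powerSubgroup G p
  have hf := QuotientGroup.mk'_surjective N
  set f := QuotientGroup.mk' N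
  refine le_antisymm
    (card_le_pow_three_of_pow_eq_one (a := f a) (b := f b) (Fact.out : p.Prime).pos ?_ ?_ ?_)
    ((hG.to_quotient N).prime_pow_three_le_card ?_)
  · exact pow_eq_one_of_powerSubgroup_le le_sup_right
  · rw [← Set.image_pair, ← MonoidHom.map_closure, hgen, map_top_of_surjective f hf]
  · rw [← map_commutator_of_surjective hf, ← map_top_of_surjective f hf, ← map_commutator,
      Subgroup.map_eq_bot_iff, QuotientGroup.ker_mk']
    exact le_sup_left
  · exact hG.commutator_quotient_ne_bot hnp

end

theorem two_generated_not_powerful_is_full_general {G : Type*} [Group G] [Finite G]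
    (p : ℕ) (hp : p.Prime) (hG : IsPGroup p G)
    (hgen : ∃ a b : G, Subgroup.closure {a, b} = ⊤)
    (hnp : ¬ commutator G ≤ Subgroup.closure {g : G | ∃ x : G, g = x ^ p}) :
    ∀ C : Subgroup G, IsCoatom C → ∀ M : Subgroup G, IsCoatom M → M ≠ C →
      ∃ K : Subgroup G, K ≤ M ∧ K.index = p ^ 2 ∧ ¬ K.Normal ∧
        (K ⊓ C).Normal ∧
        Subgroup.closure {g : G | ∃ x : G, g = x ^ p} ≤ K ⊓ C := by
  have : Fact p.Prime := ⟨hp⟩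
  obtain ⟨a, b, hab⟩ := hgen
  intro C hC M hM hMC
  set N := ⁅commutator G, (⊤ : Subgroup G)⁆ ⊔ powerSubgroup G p
  have hf := QuotientGroup.mk'_surjective N
  set f := QuotientGroup.mk' N
  have hcard := hG.card_quotient_eq_prime_pow_three hab hnp
  have hker : ∀ {L : Subgroup G}, IsCoatom L → f.ker ≤ L := fun hL =>
    (QuotientGroup.ker_mk' N).le.trans (hG.commutator_top_sup_powerSubgroup_le_of_isCoatom hL)
  obtain ⟨x, hxM, hxC⟩ : ∃ x ∈ M, x ∉ C := SetLike.not_le_iff_exists.mp fun h =>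
    hMC ((hM.le_iff.mp h).resolve_left hC.1).symm
  have hxD : f x ∉ C.map f := by rwa [← mem_comap, comap_map_eq, sup_of_le_left (hker hC)]
  have hx : orderOf (f x) = p := orderOf_eq_prime
    (pow_eq_one_of_powerSubgroup_le le_sup_right _) (fun h => hxD (h ▸ one_mem _))
  have hKC : (zpowers (f x)).comap f ⊓ C = N := by
    rw [← comap_map_eq_self (hker hC), ← comap_inf, zpowers_inf_eq_bot_of_notMem hx hxD,
      MonoidHom.comap_bot, QuotientGroup.ker_mk']
  refine ⟨(zpowers (f x)).comap f, ?_, ?_, ?_, ?_, ?_⟩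
  · rw [← comap_map_eq_self (hker hM)]
    exact comap_mono (zpowers_le.mpr (mem_map_of_mem f hxM))
  · rw [index_comap_of_surjective _ hf, index_zpowers_of_card_eq_pow_three hcard hx]
  · refine fun hK =>
      not_normal_zpowers_of_notMem hcard (hG.commutator_quotient_ne_bot hnp) ?_ hx hxD ?_
    · exact map_commutator_of_surjective hf ▸ map_mono (hG.commutator_le_of_isCoatom hC)
    · simpa only [map_comap_eq_self_of_surjective hf] using hK.map f hf
  · rw [hKC]; infer_instance
  · rw [hKC]; exact le_sup_right

/-- Let `p` be an odd prime and `G` a finite `p`-group that is 2-generated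
(`d(G) = 2`, i.e. generated by two elements but not cyclic) and not powerful
(`γ₂(G) ≰ G^p`). Then `G` is full with respect to every maximal subgroup `C`:
every maximal subgroup `M ≠ C` contains a non-normal subgroup `K` of index `p²`
in `G` such that `K ∩ C` is normal in `G` and contains `G^p`. -/
theorem two_generated_not_powerful_is_full {G : Type*} [Group G] [Finite G]
    (p : ℕ) (hp : p.Prime) (hodd : Odd p) (hG : IsPGroup p G)
    (hgen : ∃ a b : G, Subgroup.closure {a, b} = ⊤)
    (hd2 : ¬ IsCyclic G)
    (hnp : ¬ commutator G ≤ Subgroup.closure {g : G | ∃ x : G, g = x ^ p}) :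
    ∀ C : Subgroup G, IsCoatom C → ∀ M : Subgroup G, IsCoatom M → M ≠ C →
      ∃ K : Subgroup G, K ≤ M ∧ K.index = p ^ 2 ∧ ¬ K.Normal ∧
        (K ⊓ C).Normal ∧
        Subgroup.closure {g : G | ∃ x : G, g = x ^ p} ≤ K ⊓ C :=
  two_generated_not_powerful_is_full_general p hp hG hgen hnp
end
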